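/- arXiv:2112.07612 — 5 statements merged into one kernel-verified Lean document; each statement's English description precedes it below -/
import Mathlib

section
/- Let n, m be positive integers, A an n×n real matrix, B an n×m real matrix, Q an n×n positive definite real matrix and R an m×m positive definite real matrix. Suppose P : [0,1] → (n×n real matrices) is such that for every γ ∈ [0,1], P(γ) is positive semidefinite, satisfies the discounted discrete-time algebraic Riccati equation P(γ) = γ·Aᵀ P(γ) A − γ²·Aᵀ P(γ) B (R + γ·Bᵀ P(γ) B)⁻¹ Bᵀ P(γ) A + Q, and is the unique positive semidefinite solution of this equation. Then the map γ ↦ P(γ) is continuous on [0,1]. -/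
open Matrix

noncomputable def dare {n m : ℕ} (A Q : Matrix (Fin n) (Fin n) ℝ)
    (B : Matrix (Fin n) (Fin m) ℝ) (R : Matrix (Fin m) (Fin m) ℝ)
    (γ : ℝ) (P : Matrix (Fin n) (Fin n) ℝ) : Matrix (Fin n) (Fin n) ℝ :=
  γ • (Aᵀ * P * A) -
    (γ ^ 2) • (Aᵀ * P * B * (R + γ • (Bᵀ * P * B))⁻¹ * (Bᵀ * P * A)) + Q

/-!
By completing the square, `dare γ M` is the least, in the Loewner order, of the costs
`Q + γ (A + B K)ᵀ M (A + B K) + Kᵀ R K` of the linear feedbacks `K`, so it is monotone in `γ`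
and in `M ≥ 0`. Hence `P 1` is a supersolution for every `γ ≤ 1`, and iterating `dare γ` from it
gives a decreasing sequence that converges to a solution below `P 1`; by uniqueness
`0 ≤ P γ ≤ P 1`. Over `[0, 1]` the graph of `P` is the closed set of nonnegative solutions, its
values lie in the compact Loewner interval `[0, P 1]`, and a map with closed graph into a compact
set is continuous.
-/

open Filter Topology Set
open scoped MatrixOrder

namespace Matrix

lemma isSymm_of_nonneg {ι : Type*} {X : Matrix ι ι ℝ} (hX : 0 ≤ X) : X.IsSymm :=
  isHermitian_iff_isSymm.mp hX.posSemidef.isHermitian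

variable {ι κ : Type*} [Fintype ι] [Fintype κ]

lemma isClosed_setOf_posSemidef : IsClosed {M : Matrix ι ι ℝ | M.PosSemidef} := by
  simp only [posSemidef_iff_dotProduct_mulVec, ofPred_and, ofPred_forall]
  refine (isClosed_eq continuous_id.matrix_conjTranspose continuous_id).inter
    (isClosed_iInter fun x => isClosed_le continuous_const ?_)
  exact continuous_const.dotProduct (continuous_id.matrix_mulVec continuous_const)

instance : OrderClosedTopology (Matrix ι ι ℝ) where
  isClosed_le' := isClosed_setOf_posSemidef.preimage (continuous_snd.sub continuous_fst)

lemma PosSemidef.abs_apply_le {X : Matrix ι ι ℝ} (hX : X.PosSemidef) (i j : ι) :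
    |X i j| ≤ (X i i + X j j) / 2 := by
  classical
  have hji : X j i = X i j := hX.isHermitian.apply i j
  have quad (s : ℝ) : 0 ≤ X i i + 2 * s * X i j + s ^ 2 * X j j := by
    have h := hX.dotProduct_mulVec_nonneg (Pi.single i 1 + Pi.single j s)
    simp [mulVec_add, dotProduct_add, add_dotProduct, mulVec_single, single_dotProduct,
      hji] at h
    linear_combination h
  rw [abs_le]
  constructor <;> linarith [quad 1, quad (-1)]

lemma abs_apply_le_of_nonneg_of_le {X N : Matrix ι ι ℝ} (h0 : 0 ≤ X) (hN : X ≤ N) (i j : ι) :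
    |X i j| ≤ (N i i + N j j) / 2 := by
  have hi := (le_iff.mp hN).diag_nonneg (i := i)
  have hj := (le_iff.mp hN).diag_nonneg (i := j)
  simp only [sub_apply] at hi hj
  linarith [h0.posSemidef.abs_apply_le i j]

instance : CompactIccSpace (Matrix ι ι ℝ) where
  isCompact_Icc {M N} := by
    suffices h : ∀ N : Matrix ι ι ℝ, IsCompact (Icc 0 N) by
      simpa using (h (N - M)).image (continuous_const_add M)
    intro N
    set c : ι → ι → ℝ := fun i j => (N i i + N j j) / 2
    have hbox : IsCompact (X := Matrix ι ι ℝ)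
        (univ.pi fun i => univ.pi fun j => Icc (-c i j) (c i j)) :=
      isCompact_univ_pi fun i => isCompact_univ_pi fun j => isCompact_Icc
    refine hbox.of_isClosed_subset isClosed_Icc fun X hX i _ j _ => ?_
    exact abs_le.mp (abs_apply_le_of_nonneg_of_le hX.1 hX.2 i j)

lemma transpose_mul_mul_le_transpose_mul_mul {M N : Matrix ι ι ℝ} (h : M ≤ N)
    (C : Matrix ι κ ℝ) : Cᵀ * M * C ≤ Cᵀ * N * C := by
  rw [le_iff, ← Matrix.sub_mul, ← Matrix.mul_sub, ← conjTranspose_eq_transpose_of_trivial]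
  exact (le_iff.mp h).conjTranspose_mul_mul_same C

lemma transpose_mul_mul_nonneg {M : Matrix ι ι ℝ} (h : 0 ≤ M)
    (C : Matrix ι κ ℝ) : 0 ≤ Cᵀ * M * C := by
  simpa using transpose_mul_mul_le_transpose_mul_mul h C

lemma posDef_add_smul_transpose_mul_mul {R : Matrix κ κ ℝ} {M : Matrix ι ι ℝ} {γ : ℝ}
    (hR : R.PosDef) (hM : 0 ≤ M) (hγ : 0 ≤ γ) (B : Matrix ι κ ℝ) :
    (R + γ • (Bᵀ * M * B)).PosDef :=
  hR.add_posSemidef (smul_nonneg hγ (transpose_mul_mul_nonneg hM B)).posSemidef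

lemma isUnit_det_add_smul_transpose_mul_mul [DecidableEq κ] {R : Matrix κ κ ℝ}
    {M : Matrix ι ι ℝ} {γ : ℝ} (hR : R.PosDef) (hM : 0 ≤ M) (hγ : 0 ≤ γ) (B : Matrix ι κ ℝ) :
    IsUnit (R + γ • (Bᵀ * M * B)).det :=
  (posDef_add_smul_transpose_mul_mul hR hM hγ B).det_pos.ne'.isUnit

end Matrix

theorem Antitone.exists_tendsto_of_forall_le {α : Type*} [TopologicalSpace α] [PartialOrder α]
    [ClosedIciTopology α] [ClosedIicTopology α] [CompactIccSpace α] {p : ℕ → α} {a : α}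
    (hp : Antitone p) (ha : ∀ k, a ≤ p k) : ∃ L, Tendsto p atTop (𝓝 L) := by
  have hK : ∀ᶠ k in atTop, p k ∈ Icc a (p 0) :=
    Eventually.of_forall fun k => ⟨ha k, hp k.zero_le⟩
  have le_of_mapClusterPt {L : α} (hL : MapClusterPt L atTop p) (k : ℕ) : L ≤ p k :=
    isClosed_Iic.mem_of_mapClusterPt hL ((eventually_ge_atTop k).mono fun j hj => hp hj)
  obtain ⟨L, -, hL⟩ := isCompact_Icc.exists_mapClusterPt (le_principal_iff.2 hK)
  refine ⟨L, isCompact_Icc.tendsto_nhds_of_unique_mapClusterPt hK fun L' _ hL' => ?_⟩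
  exact le_antisymm
    (isClosed_Ici.mem_of_mapClusterPt hL (Eventually.of_forall (le_of_mapClusterPt hL')))
    (isClosed_Ici.mem_of_mapClusterPt hL' (Eventually.of_forall (le_of_mapClusterPt hL)))

theorem Filter.Tendsto.prodMk_mapClusterPt {X Y α : Type*} [TopologicalSpace X]
    [TopologicalSpace Y] {l : Filter α} {f : α → X} {g : α → Y} {x : X} {y : Y}
    (hf : Tendsto f l (𝓝 x)) (hg : MapClusterPt y l g) : MapClusterPt (x, y) l fun a => (f a, g a) := by
  rw [mapClusterPt_iff_frequently] at hg ⊢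
  intro s hs
  obtain ⟨U, hU, V, hV, hUV⟩ := mem_nhds_prod_iff.1 hs
  exact ((hg V hV).and_eventually (hf hU)).mono fun a ha => hUV ⟨ha.2, ha.1⟩

theorem IsCompact.continuousOn_of_isClosed_graph {X Y : Type*} [TopologicalSpace X]
    [TopologicalSpace Y] {f : X → Y} {s : Set X} {K : Set Y} (hK : IsCompact K)
    (hfK : MapsTo f s K) (hgraph : IsClosed {p : X × Y | p.1 ∈ s ∧ p.2 = f p.1}) :
    ContinuousOn f s := by
  intro x _
  refine hK.tendsto_nhds_of_unique_mapClusterPt (eventually_nhdsWithin_of_forall hfK)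
    fun y _ hy => ?_
  have hxy := (tendsto_id.mono_left nhdsWithin_le_nhds).prodMk_mapClusterPt hy
  exact (hgraph.mem_of_mapClusterPt hxy (eventually_nhdsWithin_of_forall fun z hz => ⟨hz, rfl⟩)).2

section Riccati

variable {n m : ℕ}

noncomputable def dareGain (A : Matrix (Fin n) (Fin n) ℝ) (B : Matrix (Fin n) (Fin m) ℝ)
    (R : Matrix (Fin m) (Fin m) ℝ) (γ : ℝ) (M : Matrix (Fin n) (Fin n) ℝ) :
    Matrix (Fin m) (Fin n) ℝ :=
  -(γ • ((R + γ • (Bᵀ * M * B))⁻¹ * (Bᵀ * M * A)))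

def dareCost (A Q : Matrix (Fin n) (Fin n) ℝ) (B : Matrix (Fin n) (Fin m) ℝ)
    (R : Matrix (Fin m) (Fin m) ℝ) (γ : ℝ) (M : Matrix (Fin n) (Fin n) ℝ)
    (K : Matrix (Fin m) (Fin n) ℝ) : Matrix (Fin n) (Fin n) ℝ :=
  Q + γ • ((A + B * K)ᵀ * M * (A + B * K)) + Kᵀ * R * K

variable {A Q : Matrix (Fin n) (Fin n) ℝ} {B : Matrix (Fin n) (Fin m) ℝ}
  {R : Matrix (Fin m) (Fin m) ℝ} {γ γ₁ γ₂ : ℝ} {M M₁ M₂ : Matrix (Fin n) (Fin n) ℝ}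

theorem dareCost_eq_dare_add (hM : M.IsSymm) (hR : R.IsSymm)
    (hW : IsUnit (R + γ • (Bᵀ * M * B)).det) (K : Matrix (Fin m) (Fin n) ℝ) :
    dareCost A Q B R γ M K = dare A Q B R γ M +
      (K - dareGain A B R γ M)ᵀ * (R + γ • (Bᵀ * M * B)) * (K - dareGain A B R γ M) := by
  set W := R + γ • (Bᵀ * M * B) with hW_def
  set K₀ := dareGain A B R γ M with hK₀
  have hWt : Wᵀ = W := by
    simp [W, transpose_add, transpose_smul, Matrix.mul_assoc, hM.eq, hR.eq]
  have hWK₀ : W * K₀ = -(γ • (Bᵀ * M * A)) := by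
    rw [hK₀, dareGain, Matrix.mul_neg, Matrix.mul_smul, ← Matrix.mul_assoc,
      Matrix.mul_nonsing_inv _ hW, Matrix.one_mul]
  have hK₀W : K₀ᵀ * W = -(γ • (Aᵀ * M * B)) := by
    rw [← hWt, ← transpose_mul, hWK₀]
    simp [transpose_mul, hM.eq, Matrix.mul_assoc]
  have hK₀WK₀ : K₀ᵀ * (W * K₀) = (γ ^ 2) • (Aᵀ * M * B * W⁻¹ * (Bᵀ * M * A)) := by
    rw [hWK₀, hK₀, dareGain, transpose_neg, transpose_smul, transpose_mul,
      transpose_nonsing_inv, hWt]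
    simp only [transpose_mul, transpose_transpose, hM.eq, Matrix.neg_mul, Matrix.mul_neg,
      Matrix.smul_mul, Matrix.mul_smul, smul_neg, neg_neg, smul_smul, Matrix.mul_assoc, sq]
  have expand : (K - K₀)ᵀ * W * (K - K₀) =
      Kᵀ * (W * K) - Kᵀ * (W * K₀) - K₀ᵀ * W * K + K₀ᵀ * (W * K₀) := by
    simp only [transpose_sub, Matrix.sub_mul, Matrix.mul_sub, Matrix.mul_assoc]
    abel
  rw [expand, hK₀WK₀, hWK₀, hK₀W, dare, dareCost, hW_def]
  simp only [transpose_add, transpose_mul, Matrix.mul_add, Matrix.add_mul, Matrix.mul_neg,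
    Matrix.neg_mul, Matrix.mul_smul, Matrix.smul_mul, smul_add, Matrix.mul_assoc]
  abel

theorem dare_eq_dareCost_dareGain (hR : R.PosDef) (hM : 0 ≤ M) (hγ : 0 ≤ γ) :
    dare A Q B R γ M = dareCost A Q B R γ M (dareGain A B R γ M) := by
  simp [dareCost_eq_dare_add (isSymm_of_nonneg hM) (isSymm_of_nonneg hR.posSemidef.nonneg)
    (isUnit_det_add_smul_transpose_mul_mul hR hM hγ B)]

theorem dare_le_dareCost (hR : R.PosDef) (hM : 0 ≤ M) (hγ : 0 ≤ γ)
    (K : Matrix (Fin m) (Fin n) ℝ) : dare A Q B R γ M ≤ dareCost A Q B R γ M K := by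
  rw [dareCost_eq_dare_add (isSymm_of_nonneg hM) (isSymm_of_nonneg hR.posSemidef.nonneg)
    (isUnit_det_add_smul_transpose_mul_mul hR hM hγ B)]
  exact le_add_of_nonneg_right
    (transpose_mul_mul_nonneg (posDef_add_smul_transpose_mul_mul hR hM hγ B).posSemidef.nonneg _)

theorem dareCost_mono (hM₁ : 0 ≤ M₁) (hγ₁ : 0 ≤ γ₁) (hγ : γ₁ ≤ γ₂) (hM : M₁ ≤ M₂)
    (K : Matrix (Fin m) (Fin n) ℝ) : dareCost A Q B R γ₁ M₁ K ≤ dareCost A Q B R γ₂ M₂ K := by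
  have hγM : γ₁ • M₁ ≤ γ₂ • M₂ := calc
    γ₁ • M₁ ≤ γ₂ • M₁ := smul_le_smul_of_nonneg_right hγ hM₁
    _ ≤ γ₂ • M₂ := smul_le_smul_of_nonneg_left hM (hγ₁.trans hγ)
  simpa only [dareCost, add_le_add_iff_right, add_le_add_iff_left, Matrix.mul_smul,
    Matrix.smul_mul] using transpose_mul_mul_le_transpose_mul_mul hγM (A + B * K)

theorem dare_mono (hR : R.PosDef) (hM₁ : 0 ≤ M₁) (hγ₁ : 0 ≤ γ₁) (hγ : γ₁ ≤ γ₂)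
    (hM : M₁ ≤ M₂) : dare A Q B R γ₁ M₁ ≤ dare A Q B R γ₂ M₂ := calc
  dare A Q B R γ₁ M₁ ≤ dareCost A Q B R γ₁ M₁ (dareGain A B R γ₂ M₂) :=
    dare_le_dareCost hR hM₁ hγ₁ _
  _ ≤ dareCost A Q B R γ₂ M₂ (dareGain A B R γ₂ M₂) := dareCost_mono hM₁ hγ₁ hγ hM _
  _ = dare A Q B R γ₂ M₂ := (dare_eq_dareCost_dareGain hR (hM₁.trans hM) (hγ₁.trans hγ)).symm

theorem dare_nonneg (hQ : 0 ≤ Q) (hR : R.PosDef) (hM : 0 ≤ M) (hγ : 0 ≤ γ) :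
    0 ≤ dare A Q B R γ M := by
  rw [dare_eq_dareCost_dareGain hR hM hγ, dareCost]
  exact add_nonneg (add_nonneg hQ (smul_nonneg hγ (transpose_mul_mul_nonneg hM _)))
    (transpose_mul_mul_nonneg hR.posSemidef.nonneg _)

theorem continuousAt_dare (hW : IsUnit (R + γ • (Bᵀ * M * B)).det) :
    ContinuousAt (fun p : ℝ × Matrix (Fin n) (Fin n) ℝ => dare A Q B R p.1 p.2) (γ, M) := by
  let W : ℝ × Matrix (Fin n) (Fin n) ℝ → Matrix (Fin m) (Fin m) ℝ := fun p =>
    R + p.1 • (Bᵀ * p.2 * B)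
  have hinv : ContinuousAt (fun p => (W p)⁻¹) (γ, M) :=
    ContinuousAt.comp (g := Inv.inv) (f := W)
      (continuousAt_matrix_inv _ (NormedRing.inverse_continuousAt hW.unit)) (by fun_prop)
  unfold dare
  fun_prop

theorem isClosed_setOf_dare_fixedPoint (hR : R.PosDef) :
    IsClosed {p : ℝ × Matrix (Fin n) (Fin n) ℝ |
      0 ≤ p.1 ∧ 0 ≤ p.2 ∧ p.2 = dare A Q B R p.1 p.2} := by
  have hcont : ContinuousOn (fun p : ℝ × Matrix (Fin n) (Fin n) ℝ => dare A Q B R p.1 p.2 - p.2)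
      (Ici 0 ×ˢ Ici 0) := fun p hp =>
    ((continuousAt_dare (isUnit_det_add_smul_transpose_mul_mul hR hp.2 hp.1 B)).sub
      continuousAt_snd).continuousWithinAt
  convert hcont.preimage_isClosed_of_isClosed (isClosed_Ici.prod isClosed_Ici)
    (isClosed_singleton (x := 0)) using 1
  ext p
  simp only [mem_ofPred_eq, mem_inter_iff, mem_prod, mem_Ici, mem_preimage, mem_singleton_iff,
    sub_eq_zero, eq_comm (a := p.2), and_assoc]

theorem exists_dare_fixedPoint_le (hQ : 0 ≤ Q) (hR : R.PosDef) (hγ : 0 ≤ γ)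
    {X : Matrix (Fin n) (Fin n) ℝ} (hX : 0 ≤ X) (hdX : dare A Q B R γ X ≤ X) :
    ∃ L, 0 ≤ L ∧ L ≤ X ∧ L = dare A Q B R γ L := by
  obtain ⟨p, hp_zero, hp_succ⟩ : ∃ p : ℕ → Matrix (Fin n) (Fin n) ℝ,
      p 0 = X ∧ ∀ k, p (k + 1) = dare A Q B R γ (p k) :=
    ⟨fun k => (dare A Q B R γ)^[k] X, rfl, fun k => Function.iterate_succ_apply' ..⟩
  have hp_nonneg (k : ℕ) : 0 ≤ p k := by
    induction k with
    | zero => rwa [hp_zero]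
    | succ k ih => rw [hp_succ]; exact dare_nonneg hQ hR ih hγ
  have hp_anti : Antitone p := by
    refine antitone_nat_of_succ_le fun k => ?_
    induction k with
    | zero => rwa [hp_succ, hp_zero]
    | succ k ih => calc
      p (k + 1 + 1) = dare A Q B R γ (p (k + 1)) := hp_succ _
      _ ≤ dare A Q B R γ (p k) := dare_mono hR (hp_nonneg _) hγ le_rfl ih
      _ = p (k + 1) := (hp_succ k).symm
  obtain ⟨L, hL⟩ := hp_anti.exists_tendsto_of_forall_le hp_nonneg
  have hL0 : 0 ≤ L := ge_of_tendsto' hL hp_nonneg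
  have hLX : L ≤ X := le_of_tendsto' hL fun k => hp_zero ▸ hp_anti k.zero_le
  have h1 : Tendsto (fun k => p (k + 1)) atTop (𝓝 L) := (tendsto_add_atTop_iff_nat 1).2 hL
  have hc : ContinuousAt (fun q : ℝ × Matrix (Fin n) (Fin n) ℝ => dare A Q B R q.1 q.2) (γ, L) :=
    continuousAt_dare (isUnit_det_add_smul_transpose_mul_mul hR hL0 hγ B)
  have h2 := hc.tendsto.comp ((tendsto_const_nhds (x := γ)).prodMk_nhds hL)
  exact ⟨L, hL0, hLX, tendsto_nhds_unique h1 (h2.congr fun k => (hp_succ k).symm)⟩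

end Riccati

theorem continuity_of_dare_solution_general (n m : ℕ)
    (A Q : Matrix (Fin n) (Fin n) ℝ) (B : Matrix (Fin n) (Fin m) ℝ)
    (R : Matrix (Fin m) (Fin m) ℝ) (hQ : Q.PosDef) (hR : R.PosDef)
    (P : ℝ → Matrix (Fin n) (Fin n) ℝ)
    (hPsd : ∀ γ ∈ Set.Icc (0 : ℝ) 1, (P γ).PosSemidef)
    (hPeq : ∀ γ ∈ Set.Icc (0 : ℝ) 1, P γ = dare A Q B R γ (P γ))
    (hPuniq : ∀ γ ∈ Set.Icc (0 : ℝ) 1, ∀ P' : Matrix (Fin n) (Fin n) ℝ,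
      P'.PosSemidef → P' = dare A Q B R γ P' → P' = P γ) :
    ContinuousOn P (Set.Icc (0 : ℝ) 1) := by
  have h1 : (1 : ℝ) ∈ Icc (0 : ℝ) 1 := right_mem_Icc.2 zero_le_one
  have hP_le (γ : ℝ) (hγ : γ ∈ Icc (0 : ℝ) 1) : P γ ≤ P 1 := by
    have hsuper : dare A Q B R γ (P 1) ≤ P 1 := calc
      dare A Q B R γ (P 1) ≤ dare A Q B R 1 (P 1) :=
        dare_mono hR (hPsd 1 h1).nonneg hγ.1 hγ.2 le_rfl
      _ = P 1 := (hPeq 1 h1).symm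
    obtain ⟨L, hL0, hL1, hLfix⟩ := exists_dare_fixedPoint_le hQ.posSemidef.nonneg hR hγ.1
      (hPsd 1 h1).nonneg hsuper
    rwa [← hPuniq γ hγ L hL0.posSemidef hLfix]
  have hgraph : {p : ℝ × Matrix (Fin n) (Fin n) ℝ | p.1 ∈ Icc 0 1 ∧ p.2 = P p.1} =
      Icc 0 1 ×ˢ univ ∩ {p | 0 ≤ p.1 ∧ 0 ≤ p.2 ∧ p.2 = dare A Q B R p.1 p.2} := by
    ext ⟨γ, M⟩
    simp only [mem_ofPred_eq, mem_inter_iff, mem_prod, mem_univ, and_true]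
    constructor
    · rintro ⟨hγ, rfl⟩
      exact ⟨hγ, hγ.1, (hPsd γ hγ).nonneg, hPeq γ hγ⟩
    · rintro ⟨hγ, -, hM, hfix⟩
      exact ⟨hγ, hPuniq γ hγ M hM.posSemidef hfix⟩
  refine isCompact_Icc.continuousOn_of_isClosed_graph
    (fun γ hγ => ⟨(hPsd γ hγ).nonneg, hP_le γ hγ⟩) ?_
  rw [hgraph]
  exact (isClosed_Icc.prod isClosed_univ).inter (isClosed_setOf_dare_fixedPoint hR)

/-- If, for every discount factor `γ ∈ [0,1]`, `P γ` is the unique positive semidefinite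
solution of the discounted discrete-time algebraic Riccati equation, then `γ ↦ P γ`
is continuous on `[0,1]`. -/
theorem continuity_of_dare_solution (n m : ℕ) (hn : 0 < n) (hm : 0 < m)
    (A Q : Matrix (Fin n) (Fin n) ℝ) (B : Matrix (Fin n) (Fin m) ℝ)
    (R : Matrix (Fin m) (Fin m) ℝ) (hQ : Q.PosDef) (hR : R.PosDef)
    (P : ℝ → Matrix (Fin n) (Fin n) ℝ)
    (hPsd : ∀ γ ∈ Set.Icc (0 : ℝ) 1, (P γ).PosSemidef)
    (hPeq : ∀ γ ∈ Set.Icc (0 : ℝ) 1, P γ = dare A Q B R γ (P γ))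
    (hPuniq : ∀ γ ∈ Set.Icc (0 : ℝ) 1, ∀ P' : Matrix (Fin n) (Fin n) ℝ,
      P'.PosSemidef → P' = dare A Q B R γ P' → P' = P γ) :
    ContinuousOn P (Set.Icc (0 : ℝ) 1) :=
  continuity_of_dare_solution_general n m A Q B R hQ hR P hPsd hPeq hPuniq
end

section
/- Let n be a positive integer and let w₁, …, w_n ∈ ℝⁿ be linearly independent. Then the 2n functions ℝⁿ → ℝ given by x ↦ max(⟨w_k, x⟩, 0) and x ↦ max(−⟨w_k, x⟩, 0), for k = 1, …, n, are linearly independent in the real vector space of functions from ℝⁿ to ℝ: if a₁, …, a_n, b₁, …, b_n ∈ ℝ satisfy Σ_{k=1}^{n} a_k·max(⟨w_k, x⟩, 0) + b_k·max(−⟨w_k, x⟩, 0) = 0 for all x ∈ ℝⁿ, then a_k = b_k = 0 for all k. -/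
open scoped RealInnerProductSpace

/-- If `w₁, …, w_n ∈ ℝⁿ` are linearly independent, then the `2n` ReLU features
`x ↦ max(⟨w_k, x⟩, 0)` and `x ↦ max(−⟨w_k, x⟩, 0)` are linearly independent functions:
any vanishing linear combination has all coefficients zero. -/
theorem relu_features_linear_independent (n : ℕ) (hn : 0 < n)
    (w : Fin n → EuclideanSpace ℝ (Fin n))
    (hw : LinearIndependent ℝ w)
    (a b : Fin n → ℝ)
    (h : ∀ x : EuclideanSpace ℝ (Fin n),
      ∑ k, (a k * max (⟪w k, x⟫) 0 + b k * max (-⟪w k, x⟫) 0) = 0) :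
    ∀ k, a k = 0 ∧ b k = 0 := by
  classical
  have : Nonempty (Fin n) := ⟨⟨0, hn⟩⟩
  set T : EuclideanSpace ℝ (Fin n) →ₗ[ℝ] (Fin n → ℝ) :=
    { toFun := fun x => fun j => ⟪w j, x⟫
      map_add' := by intro x y; funext j; simp [inner_add_right]
      map_smul' := by intro c x; funext j; simp [inner_smul_right] }
  have hspan : Submodule.span ℝ (Set.range w) = ⊤ :=
    hw.span_eq_top_of_card_eq_finrank (by simp)
  have hinj : Function.Injective T := by
    rw [← LinearMap.ker_eq_bot, Submodule.eq_bot_iff]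
    intro x hx
    have hx' : ∀ j, ⟪w j, x⟫ = 0 := fun j => congrFun hx j
    have hall : ∀ y : EuclideanSpace ℝ (Fin n), ⟪y, x⟫ = 0 := by
      intro y
      have hy : y ∈ Submodule.span ℝ (Set.range w) := hspan ▸ Submodule.mem_top
      refine Submodule.span_induction ?_ ?_ ?_ ?_ hy
      · rintro _ ⟨j, rfl⟩; exact hx' j
      · simp
      · intro u v _ _ hu hv; rw [inner_add_left, hu, hv]; ring
      · intro c u _ hu; rw [real_inner_smul_left, hu]; ring
    have := hall x
    exact inner_self_eq_zero.mp this
  have hsurj : Function.Surjective T :=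
    (LinearMap.injective_iff_surjective_of_finrank_eq_finrank (by simp)).mp hinj
  intro k
  obtain ⟨x, hxk⟩ := hsurj (Pi.single k (1:ℝ))
  have hx : ∀ j, ⟪w j, x⟫ = (Pi.single k (1:ℝ) : Fin n → ℝ) j := fun j => by simpa [T] using congrFun hxk j
  have key : ∀ (y : EuclideanSpace ℝ (Fin n)), (∀ j, ⟪w j, y⟫ = (Pi.single k (1:ℝ) : Fin n → ℝ) j) →
      ∑ j, (a j * max (⟪w j, y⟫) 0 + b j * max (-⟪w j, y⟫) 0) =
        a k := by
    intro y hy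
    rw [Finset.sum_eq_single k]
    · rw [hy k]; simp
    · intro j _ hj
      rw [hy j, Pi.single_eq_of_ne hj]
      simp
    · simp
  have hxneg : ∀ j, ⟪w j, (-x : EuclideanSpace ℝ (Fin n))⟫ = -((Pi.single k (1:ℝ) : Fin n → ℝ) j) := by
    intro j; rw [inner_neg_right, hx j]
  have ha : a k = 0 := by rw [← key x hx]; exact h x
  have hb : b k = 0 := by
    have := h (-x)
    rw [Finset.sum_eq_single k] at this
    · rw [hxneg k] at this; simpa [ha] using this
    · intro j _ hj
      rw [hxneg j, Pi.single_eq_of_ne hj]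
      simp
    · simp
  exact ⟨ha, hb⟩
end

section
/- Fix γ ∈ (0,1) and R ∈ (0,γ), and let θ = (0,1). For every α > 0 there exist δ > 0 (the tent-width parameter of F), c > 0 and r > 0 such that for each z ∈ {x⋆, y⋆} and every dθ = (dθ₀, dθ₁) ∈ ℝ² with 0 < ‖dθ‖ < r satisfying |z·dθ₀ + F(z)·dθ₁| ≥ α‖dθ‖₁, the cost difference is strictly positive and bounded below: C[z](θ + dθ) − C[z](θ) ≥ c·‖dθ‖₁. -/
/-
For `δ ≤ 1/10` the states `x⋆, y⋆` lie on the steep flank of the tent at `−2`, and `p = F(z)` is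
the apex of a tent of width `δ`; at `θ = (0,1)` the trajectory is `z, p, 0.2 − p/2, …`.
For `θ` near `(0,1)` the state `x₂` lies in `(−1.9, 0]`, where `F(x) = x/2`, so from then on the
trajectory contracts with ratio `s = θ₀ + θ₁/2` and `C[z](θ) = z² + (γ + R)(x₁² + γ x₂² / (1 − γ s²))`.
A perturbation `dθ` moves `x₁` to `p + e` with `e = z dθ₀ + F(z) dθ₁`, and whatever the sign of `e`
the tent of slope `0.2/δ` pushes `x₂` down by about `0.2|e|/δ`. Outside the cone
`|e| ≥ α‖dθ‖₁`, so for `δ` of order `γα` this gain in `x₂²` beats the `O(‖dθ‖₁)` changes of `x₁²`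
and of the contraction ratio.
-/

open MeasureTheory

/-- The tent (spike) function of width `2δ` centered at `a`. -/
noncomputable def tent (a δ x : ℝ) : ℝ :=
  if x ∈ Set.Icc (a - δ) a then (x - (a - δ)) / δ
  else if x ∈ Set.Icc a (a + δ) then ((a + δ) - x) / δ
  else 0

/-- The nonlinear feature `F(x) = ω₀|x| + Σᵢ ωᵢ Λ_{aᵢ,δᵢ}(x)` with the paper's parameters
`ω₀ = −0.5, a₁ = −2, δ₁ = 0.1, ω₁ = 3, a₂ = 1.5, a₃ = 1.8, ω₂ = ω₃ = 0.2, δ₂ = δ₃ = δ`. -/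
noncomputable def Fex (δ x : ℝ) : ℝ :=
  (-0.5) * |x| + 3 * tent (-2) 0.1 x + 0.2 * tent 1.5 δ x + 0.2 * tent 1.8 δ x

/-- The closed-loop trajectory: `x₀ = z`, `x_{t+1} = u_t = θ₀ x_t + θ₁ F(x_t)`. -/
noncomputable def traj (δ : ℝ) (θ : ℝ × ℝ) (z : ℝ) : ℕ → ℝ
  | 0 => z
  | t + 1 => θ.1 * traj δ θ z t + θ.2 * Fex δ (traj δ θ z t)

/-- The discounted cost `C[z](θ) = Σ_t γᵗ (x_t² + R u_t²)` (note `u_t = x_{t+1}`). -/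
noncomputable def cost (γ R δ : ℝ) (θ : ℝ × ℝ) (z : ℝ) : ℝ :=
  ∑' t : ℕ, γ ^ t * ((traj δ θ z t) ^ 2 + R * (traj δ θ z (t + 1)) ^ 2)

/-- `x⋆ = min F⁻¹({a₂})`, the smallest preimage of `a₂ = 1.5` under `F`. -/
noncomputable def xstar (δ : ℝ) : ℝ := sInf {x : ℝ | Fex δ x = 1.5}

/-- `y⋆ = min F⁻¹({a₃})`, the smallest preimage of `a₃ = 1.8` under `F`. -/
noncomputable def ystar (δ : ℝ) : ℝ := sInf {x : ℝ | Fex δ x = 1.8}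

/-- The ℓ¹ norm `‖(a,b)‖₁ = |a| + |b|` on `ℝ²`. -/
noncomputable def l1 (dθ : ℝ × ℝ) : ℝ := |dθ.1| + |dθ.2|

open Set

lemma tent_eq_zero_of_lt_sub {a δ x : ℝ} (h : x < a - δ) : tent a δ x = 0 := by
  rw [tent, if_neg fun hx => by linarith [hx.1], if_neg fun hx => by linarith [hx.1, hx.2]]

lemma tent_eq_zero_of_add_lt {a δ x : ℝ} (h : a + δ < x) : tent a δ x = 0 := by
  rw [tent, if_neg fun hx => by linarith [hx.1, hx.2], if_neg fun hx => by linarith [hx.2]]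

lemma tent_add_of_abs_le {a δ e : ℝ} (hδ : 0 < δ) (he : |e| ≤ δ) :
    tent a δ (a + e) = 1 - |e| / δ := by
  obtain ⟨he₁, he₂⟩ := abs_le.mp he
  rcases le_or_gt e 0 with h | h
  · rw [tent, if_pos ⟨by linarith, by linarith⟩, abs_of_nonpos h]
    field_simp
    ring
  · rw [tent, if_neg fun hx => by linarith [hx.2], if_pos ⟨by linarith, by linarith⟩,
      abs_of_pos h]
    field_simp
    ring

lemma Fex_eq_half {δ x : ℝ} (hδ : δ < 1.5) (hx : x ≤ 0) (h : x < -2.1 ∨ -1.9 < x) :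
    Fex δ x = x / 2 := by
  have h₂ : tent (-2) 0.1 x = 0 := by
    rcases h with h | h
    · exact tent_eq_zero_of_lt_sub (by linarith)
    · exact tent_eq_zero_of_add_lt (by linarith)
  rw [Fex, abs_of_nonpos hx, h₂, tent_eq_zero_of_lt_sub (by linarith),
    tent_eq_zero_of_lt_sub (by linarith)]
  ring

lemma Fex_of_mem_Icc {δ x : ℝ} (hδ : δ < 1.5) (hx : x ∈ Icc (-2.1) (-2)) :
    Fex δ x = 61 / 2 * x + 63 := by
  rw [Fex, abs_of_neg (by linarith [hx.2]), tent, if_pos (by norm_num at hx ⊢; exact hx),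
    tent_eq_zero_of_lt_sub (by linarith [hx.2]), tent_eq_zero_of_lt_sub (by linarith [hx.2])]
  norm_num
  ring

lemma Fex_add_of_abs_le {δ p e : ℝ} (hδ : 0 < δ) (hδ' : δ < 0.15) (hp : p = 1.5 ∨ p = 1.8)
    (he : |e| ≤ δ) : Fex δ (p + e) = 0.2 - p / 2 - e / 2 - 0.2 * |e| / δ := by
  obtain ⟨he₁, he₂⟩ := abs_le.mp he
  rcases hp with rfl | rfl
  · rw [Fex, abs_of_pos (by linarith), tent_eq_zero_of_add_lt (by linarith),
      tent_add_of_abs_le hδ he, tent_eq_zero_of_lt_sub (by linarith)]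
    ring
  · rw [Fex, abs_of_pos (by linarith), tent_eq_zero_of_add_lt (by linarith),
      tent_eq_zero_of_add_lt (by linarith), tent_add_of_abs_le hδ he]
    ring

lemma isLeast_Fex_preimage {δ c : ℝ} (hδ : δ < 1.5) (hc : c ∈ Ioc (-1.05) 2) :
    IsLeast {x | Fex δ x = c} (2 * (c - 63) / 61) := by
  obtain ⟨hc₁, hc₂⟩ := hc
  refine ⟨?_, fun x hx => ?_⟩
  · rw [mem_ofPred_eq, Fex_of_mem_Icc hδ ⟨by linarith, by linarith⟩]
    ring
  by_contra! hlt
  rcases lt_or_ge x (-2.1) with h | h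
  · rw [mem_ofPred_eq, Fex_eq_half hδ (by linarith) (Or.inl h)] at hx
    linarith
  · rw [mem_ofPred_eq, Fex_of_mem_Icc hδ ⟨h, by linarith⟩] at hx
    linarith

lemma sInf_Fex_preimage_mem {δ c : ℝ} (hδ : δ < 1.5) (hc : c ∈ Ioc (-1.05) 2) :
    sInf {x | Fex δ x = c} ∈ Icc (-2.1) (-2) ∧ Fex δ (sInf {x | Fex δ x = c}) = c := by
  have h := isLeast_Fex_preimage hδ hc
  rw [h.csInf_eq]
  exact ⟨⟨by linarith [hc.1], by linarith [hc.2]⟩, h.1⟩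

lemma traj_add (δ : ℝ) (θ : ℝ × ℝ) (z : ℝ) (n t : ℕ) :
    traj δ θ z (n + t) = traj δ θ (traj δ θ z n) t := by
  induction t with
  | zero => rfl
  | succ t ih => rw [← Nat.add_assoc, traj, traj, ih]

lemma traj_eq_geometric {δ s x : ℝ} {θ : ℝ × ℝ} (hδ : δ < 1.5) (hx : x ∈ Ioc (-1.9) 0)
    (hs : s ∈ Icc 0 1) (hθ : θ.1 + θ.2 / 2 = s) (t : ℕ) : traj δ θ x t = x * s ^ t := by
  induction t with
  | zero => simp [traj]
  | succ t ih =>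
    have hst₀ : 0 ≤ s ^ t := pow_nonneg hs.1 t
    have hst₁ : s ^ t ≤ 1 := pow_le_one₀ hs.1 hs.2
    have hy₀ : x * s ^ t ≤ 0 := mul_nonpos_of_nonpos_of_nonneg hx.2 hst₀
    have hy₁ : -1.9 < x * s ^ t := by nlinarith [hx.1, hx.2]
    rw [traj, ih, Fex_eq_half hδ hy₀ (Or.inr hy₁), pow_succ, ← hθ]
    ring

lemma cost_eq_of_geometric_tail {γ R δ s z : ℝ} {θ : ℝ × ℝ} (hγs : |γ * s ^ 2| < 1)
    (h : ∀ t, traj δ θ z (t + 2) = traj δ θ z 2 * s ^ t) :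
    cost γ R δ θ z =
      z ^ 2 + (γ + R) * (traj δ θ z 1 ^ 2 + γ * traj δ θ z 2 ^ 2 / (1 - γ * s ^ 2)) := by
  set f : ℕ → ℝ := fun t => γ ^ t * (traj δ θ z t ^ 2 + R * traj δ θ z (t + 1) ^ 2)
  have hf (t : ℕ) :
      f (t + 2) = γ ^ 2 * traj δ θ z 2 ^ 2 * (1 + R * s ^ 2) * (γ * s ^ 2) ^ t := by
    have h' := h (t + 1)
    rw [Nat.add_right_comm] at h'
    simp only [f]
    rw [h t, h']
    ring
  have hsum : Summable f := (summable_nat_add_iff 2).mp <|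
    ((summable_geometric_of_abs_lt_one hγs).mul_left _).congr fun t => (hf t).symm
  have hne : 1 - γ * s ^ 2 ≠ 0 := by linarith [le_abs_self (γ * s ^ 2)]
  rw [cost, ← hsum.sum_add_tsum_nat_add 2, tsum_congr hf, tsum_mul_left,
    tsum_geometric_of_abs_lt_one hγs, Finset.sum_range_succ, Finset.sum_range_one]
  simp only [f, traj]
  field_simp
  ring

lemma cost_eq_of_traj_two_mem {γ R δ z : ℝ} {θ : ℝ × ℝ} (hδ : δ < 1.5) (hγ : |γ| < 1)
    (h₂ : traj δ θ z 2 ∈ Ioc (-1.9) 0) (hs : θ.1 + θ.2 / 2 ∈ Icc 0 1) :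
    cost γ R δ θ z = z ^ 2 + (γ + R) *
      (traj δ θ z 1 ^ 2 + γ * traj δ θ z 2 ^ 2 / (1 - γ * (θ.1 + θ.2 / 2) ^ 2)) := by
  refine cost_eq_of_geometric_tail ?_ fun t => ?_
  · rw [abs_mul, abs_of_nonneg (sq_nonneg (θ.1 + θ.2 / 2))]
    calc |γ| * (θ.1 + θ.2 / 2) ^ 2 ≤ |γ| * 1 := by
          gcongr
          exact pow_le_one₀ hs.1 hs.2
      _ < 1 := by simpa using hγ
  · rw [Nat.add_comm t 2, traj_add, traj_eq_geometric hδ h₂ hs rfl]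

lemma perturbed_second_state_mem {p e κ a b l : ℝ} (hp : p ∈ Icc 1.5 1.8)
    (hab : |a| + |b| ≤ l) (hl : l ≤ 0.02) (he : |e| ≤ 2.1 * l) (hκ : 40 * l ≤ κ)
    (hκ' : κ ≤ 0.01) :
    a * (p + e) + (1 + b) * (0.2 - p / 2 - e / 2 - κ) ∈ Ioc (-1.9) (0.2 - p / 2 - κ / 2) := by
  obtain ⟨hp₁, hp₂⟩ := hp
  obtain ⟨he₁, he₂⟩ := abs_le.mp he
  have hl₀ : 0 ≤ l := (add_nonneg (abs_nonneg a) (abs_nonneg b)).trans hab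
  have hdev : |a * (p + e) + b * (0.2 - p / 2 - e / 2 - κ) - e / 2| ≤ 3 * l :=
    calc |a * (p + e) + b * (0.2 - p / 2 - e / 2 - κ) - e / 2|
        ≤ |a| * |p + e| + |b| * |0.2 - p / 2 - e / 2 - κ| + |e| / 2 := by
          rw [← abs_mul, ← abs_mul, ← abs_two, ← abs_div, abs_two]
          exact (abs_sub _ _).trans (add_le_add (abs_add_le _ _) le_rfl)
      _ ≤ |a| * 1.9 + |b| * 0.75 + |e| / 2 := by
          gcongr
          · exact abs_le.mpr ⟨by linarith, by linarith⟩
          · exact abs_le.mpr ⟨by linarith, by linarith⟩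
      _ ≤ 3 * l := by linarith [abs_nonneg a, abs_nonneg b]
  obtain ⟨hdev₁, hdev₂⟩ := abs_le.mp hdev
  constructor <;> nlinarith

lemma one_div_one_sub_mul_sq_sub_ge {γ s l : ℝ} (hγ : γ ∈ Icc 0 1) (hs : |s - 1 / 2| ≤ l)
    (hl : l ≤ 0.02) : -2 * l ≤ 1 / (1 - γ * s ^ 2) - 1 / (1 - γ * (1 / 2) ^ 2) := by
  obtain ⟨hγ₀, hγ₁⟩ := hγ
  obtain ⟨hs₁, hs₂⟩ := abs_le.mp hs
  have hD₁ : 0.72 ≤ 1 - γ * s ^ 2 := by nlinarith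
  have hD₂ : 0.75 ≤ 1 - γ * (1 / 2) ^ 2 := by nlinarith
  have hnum : -(1.02 * l) ≤ s ^ 2 - (1 / 2) ^ 2 := by nlinarith
  rw [div_sub_div _ _ (by positivity) (by positivity), le_div_iff₀ (by positivity)]
  nlinarith [mul_le_mul hD₁ hD₂ (by norm_num) (by linarith)]

lemma le_cost_bracket_sub {γ p e κ a b l W : ℝ} (hγ : γ ∈ Ioo 0 1) (hp : p ∈ Icc 1.5 1.8)
    (hab : |a| + |b| ≤ l) (hl : l ≤ 0.02) (he : |e| ≤ 2.1 * l) (hκ : 40 * l ≤ γ * κ)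
    (hW : W ≤ 0.2 - p / 2 - κ / 2) :
    l ≤ (p + e) ^ 2 + γ * W ^ 2 / (1 - γ * (a + (1 + b) / 2) ^ 2)
      - (p ^ 2 + γ * (0.2 - p / 2) ^ 2 / (1 - γ * (1 / 2) ^ 2)) := by
  obtain ⟨hγ₀, hγ₁⟩ := hγ
  obtain ⟨hp₁, hp₂⟩ := hp
  obtain ⟨he₁, he₂⟩ := abs_le.mp he
  set w := 0.2 - p / 2
  set s := a + (1 + b) / 2
  have hl₀ : 0 ≤ l := (add_nonneg (abs_nonneg a) (abs_nonneg b)).trans hab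
  have hκ₀ : 0 ≤ κ := nonneg_of_mul_nonneg_right (by linarith) hγ₀
  have hs : |s - 1 / 2| ≤ l := by
    calc |s - 1 / 2| = |a + b / 2| := by congr 1; simp only [s]; ring
      _ ≤ |a| + |b / 2| := abs_add_le _ _
      _ ≤ l := by rw [abs_div, abs_two]; linarith [abs_nonneg b]
  have hlip := one_div_one_sub_mul_sq_sub_ge ⟨hγ₀.le, hγ₁.le⟩ hs hl
  have hI : 1 ≤ 1 / (1 - γ * s ^ 2) := by
    rw [one_le_div₀] <;> nlinarith [sq_nonneg s, abs_le.mp hs]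
  have hw₁ : -0.7 ≤ w := by simp only [w]; linarith
  have hw₂ : w ≤ -0.55 := by simp only [w]; linarith
  have hWw : κ / 2 ≤ W ^ 2 - w ^ 2 := by
    nlinarith [mul_nonneg (by linarith : 0 ≤ w - W) (by linarith : 0 ≤ -w - W - 1)]
  have hpe : -(7.77 * l) ≤ (p + e) ^ 2 - p ^ 2 := by nlinarith
  have hgain : 20 * l ≤ γ * (W ^ 2 - w ^ 2) * (1 / (1 - γ * s ^ 2)) := by
    have hγW : 0 ≤ γ * (W ^ 2 - w ^ 2) := mul_nonneg hγ₀.le (by linarith)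
    nlinarith [mul_le_mul_of_nonneg_left hI hγW, mul_le_mul_of_nonneg_left hWw hγ₀.le]
  have hloss : -l ≤ γ * w ^ 2 * (1 / (1 - γ * s ^ 2) - 1 / (1 - γ * (1 / 2) ^ 2)) := by
    have hγw : γ * w ^ 2 ≤ 0.49 := by nlinarith
    nlinarith [mul_le_mul_of_nonneg_left hlip (by positivity : 0 ≤ γ * w ^ 2)]
  calc l ≤ ((p + e) ^ 2 - p ^ 2) + γ * (W ^ 2 - w ^ 2) * (1 / (1 - γ * s ^ 2))
        + γ * w ^ 2 * (1 / (1 - γ * s ^ 2) - 1 / (1 - γ * (1 / 2) ^ 2)) := by linarith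
    _ = _ := by ring

lemma cost_sub_eq_of_apex {γ R δ z a b p e κ : ℝ} (hδ : 0 < δ) (hδ' : δ < 0.15)
    (hγ : |γ| < 1) (hzp : Fex δ z = p) (hp : p = 1.5 ∨ p = 1.8) (hze : z * a + p * b = e)
    (he : |e| ≤ δ) (hκ : 0.2 * |e| / δ = κ)
    (hW : a * (p + e) + (1 + b) * (0.2 - p / 2 - e / 2 - κ) ∈ Ioc (-1.9) 0)
    (hs : a + (1 + b) / 2 ∈ Icc 0 1) :
    cost γ R δ ((0, 1) + (a, b)) z - cost γ R δ (0, 1) z =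
      (γ + R) * ((p + e) ^ 2 + γ * (a * (p + e) + (1 + b) * (0.2 - p / 2 - e / 2 - κ)) ^ 2 /
        (1 - γ * (a + (1 + b) / 2) ^ 2)
        - (p ^ 2 + γ * (0.2 - p / 2) ^ 2 / (1 - γ * (1 / 2) ^ 2))) := by
  have hp' : p ∈ Icc 1.5 1.8 := by rcases hp with rfl | rfl <;> norm_num
  have hδ₁ : δ < 1.5 := by linarith
  have hFp : Fex δ p = 0.2 - p / 2 := by
    simpa using Fex_add_of_abs_le hδ hδ' hp (e := 0) (by simpa using hδ.le)
  have hFe : Fex δ (p + e) = 0.2 - p / 2 - e / 2 - κ := hκ ▸ Fex_add_of_abs_le hδ hδ' hp he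
  have h₀₁ : traj δ (0, 1) z 1 = p := by simp [traj, hzp]
  have h₀₂ : traj δ (0, 1) z 2 = 0.2 - p / 2 := by rw [traj, h₀₁, hFp]; simp
  have h₁ : traj δ (a, 1 + b) z 1 = p + e := by rw [traj, traj, hzp, ← hze]; ring
  have h₂ : traj δ (a, 1 + b) z 2 = a * (p + e) + (1 + b) * (0.2 - p / 2 - e / 2 - κ) := by
    rw [traj, h₁, hFe]
  have hc₀ : cost γ R δ (0, 1) z =
      z ^ 2 + (γ + R) * (p ^ 2 + γ * (0.2 - p / 2) ^ 2 / (1 - γ * (1 / 2) ^ 2)) := by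
    have h₀₂' : traj δ (0, 1) z 2 ∈ Ioc (-1.9) 0 :=
      h₀₂ ▸ ⟨by linarith [hp'.2], by linarith [hp'.1]⟩
    rw [cost_eq_of_traj_two_mem hδ₁ hγ h₀₂' (by norm_num), h₀₁, h₀₂]
    norm_num
  have hc : cost γ R δ (a, 1 + b) z = z ^ 2 + (γ + R) * ((p + e) ^ 2 +
      γ * (a * (p + e) + (1 + b) * (0.2 - p / 2 - e / 2 - κ)) ^ 2 /
        (1 - γ * (a + (1 + b) / 2) ^ 2)) := by
    rw [cost_eq_of_traj_two_mem hδ₁ hγ (h₂ ▸ hW) hs, h₁, h₂]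
  rw [show ((0, 1) + (a, b) : ℝ × ℝ) = (a, 1 + b) by simp, hc, hc₀]
  ring

lemma cost_sub_ge_of_cone {γ R α δ z : ℝ} {dθ : ℝ × ℝ} (hγ : γ ∈ Ioo 0 1)
    (hR : 0 ≤ R) (hδ : 0 < δ) (hδ' : δ ≤ 0.1) (hδα : δ ≤ γ * α / 200)
    (hz : z ∈ Icc (-2.1) (-2)) (hp : Fex δ z = 1.5 ∨ Fex δ z = 1.8) (hr : ‖dθ‖ < δ / 100)
    (hcone : α * l1 dθ ≤ |z * dθ.1 + Fex δ z * dθ.2|) :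
    (γ + R) * l1 dθ ≤ cost γ R δ ((0, 1) + dθ) z - cost γ R δ (0, 1) z := by
  obtain ⟨a, b⟩ := dθ
  dsimp only at hcone ⊢
  set p := Fex δ z
  set e := z * a + p * b
  set κ := 0.2 * |e| / δ
  set l := l1 (a, b)
  have hab : |a| + |b| = l := rfl
  have hl₀ : 0 ≤ l := by rw [← hab]; positivity
  have hp' : p ∈ Icc 1.5 1.8 := by rcases hp with h | h <;> rw [h] <;> norm_num
  have hlδ : l < δ / 50 := by
    have ha : |a| < δ / 100 := (norm_fst_le (a, b)).trans_lt hr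
    have hb : |b| < δ / 100 := (norm_snd_le (a, b)).trans_lt hr
    linarith
  have he : |e| ≤ 2.1 * l := by
    have hz' : |z| ≤ 2.1 := abs_le.mpr ⟨hz.1, by linarith [hz.2]⟩
    have hp'' : |p| ≤ 2.1 := abs_le.mpr ⟨by linarith [hp'.1], by linarith [hp'.2]⟩
    calc |e| ≤ |z| * |a| + |p| * |b| := by
          rw [← abs_mul, ← abs_mul]; exact abs_add_le _ _
      _ ≤ 2.1 * |a| + 2.1 * |b| := by gcongr
      _ = 2.1 * l := by rw [← hab]; ring
  -- the cone condition is what makes the tent's push `κ` of order `l / γ`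
  have hκ : 40 * l ≤ γ * κ := by
    have hγα : 200 * δ ≤ γ * α := by linarith
    rw [show γ * κ = 0.2 * (γ * |e|) / δ by simp only [κ]; ring, le_div_iff₀ hδ]
    nlinarith [mul_le_mul_of_nonneg_left hcone hγ.1.le, mul_le_mul_of_nonneg_left hγα hl₀]
  have hκ' : κ ≤ 0.01 := by
    rw [div_le_iff₀ hδ]; linarith
  have hκ₀ : 0 ≤ κ := by positivity
  obtain ⟨hW₁, hW₂⟩ :=
    perturbed_second_state_mem hp' hab.le (by linarith) he (by nlinarith [hγ.2]) hκ'
  have hs : a + (1 + b) / 2 ∈ Icc 0 1 := by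
    constructor <;> linarith [neg_abs_le a, neg_abs_le b, le_abs_self a, le_abs_self b]
  have hW : a * (p + e) + (1 + b) * (0.2 - p / 2 - e / 2 - κ) ∈ Ioc (-1.9) 0 :=
    ⟨hW₁, by linarith [hp'.1]⟩
  rw [cost_sub_eq_of_apex hδ (by linarith) (abs_lt.mpr ⟨by linarith [hγ.1], hγ.2⟩) rfl hp rfl
    (by linarith) rfl hW hs]
  exact mul_le_mul_of_nonneg_left (le_cost_bracket_sub hγ hp' hab.le (by linarith) he hκ hW₂)
    (by linarith [hγ.1])

/-- Outside the cone `{|z·dθ₀ + F(z)·dθ₁| ≥ α‖dθ‖₁}` associated with an atomic initial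
state `z ∈ {x⋆, y⋆}`, every small perturbation of `θ = (0,1)` strictly increases the cost,
with increase bounded below by a multiple of `‖dθ‖₁`. -/
theorem cost_increase_outside_cone (γ R : ℝ)
    (hγ : γ ∈ Set.Ioo (0 : ℝ) 1) (hR : R ∈ Set.Ioo (0 : ℝ) γ)
    (α : ℝ) (hα : 0 < α) :
    ∃ δ > (0 : ℝ), ∃ c > (0 : ℝ), ∃ r > (0 : ℝ),
      ∀ z ∈ ({xstar δ, ystar δ} : Set ℝ),
        ∀ dθ : ℝ × ℝ, dθ ≠ 0 → ‖dθ‖ < r →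
          α * l1 dθ ≤ |z * dθ.1 + Fex δ z * dθ.2| →
          c * l1 dθ ≤
            cost γ R δ (((0, 1) : ℝ × ℝ) + dθ) z - cost γ R δ ((0, 1) : ℝ × ℝ) z := by
  set δ := min (0.1 : ℝ) (γ * α / 200)
  have hδ : 0 < δ := lt_min (by norm_num) (by have := hγ.1; positivity)
  have hδ₁ : δ < 1.5 := (min_le_left _ _).trans_lt (by norm_num)
  refine ⟨δ, hδ, γ + R, by linarith [hγ.1, hR.1], δ / 100, by positivity, ?_⟩
  intro z hz dθ _ hr hcone
  have hz' : z ∈ Icc (-2.1) (-2) ∧ (Fex δ z = 1.5 ∨ Fex δ z = 1.8) := by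
    rcases hz with rfl | rfl
    · exact (sInf_Fex_preimage_mem hδ₁ (by norm_num)).imp_right Or.inl
    · exact (sInf_Fex_preimage_mem hδ₁ (by norm_num)).imp_right Or.inr
  exact cost_sub_ge_of_cone hγ hR.1.le hδ (min_le_left _ _) (min_le_right _ _) hz'.1 hz'.2 hr
    hcone
end

section
/- Fix γ ∈ (0,1), R ∈ (0,γ) and a tent-width parameter δ > 0 sufficiently small, and let θ = (0,1). There exist K' > 0 and r > 0 such that for every dθ ∈ ℝ² with ‖dθ‖ < r, the averaged cost difference over the uniform part of the initial-state distribution is bounded: | (1/10)·∫_{−5}^{5} (C[u](θ + dθ) − C[u](θ)) du | ≤ K'·‖dθ‖₁. -/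
open MeasureTheory

lemma tent_eq_max (a δ x : ℝ) (hδ : 0 < δ) :
    tent a δ x = max 0 (1 - |x - a| / δ) := by
  unfold tent
  split_ifs with h1 h2
  · obtain ⟨hl, hr⟩ := h1
    have e : 1 - |x - a| / δ = (x - (a - δ)) / δ := by
      rw [abs_of_nonpos (by linarith)]
      field_simp
      ring
    rw [e, max_eq_right (div_nonneg (by linarith) hδ.le)]
  · obtain ⟨hl, hr⟩ := h2
    have e : 1 - |x - a| / δ = ((a + δ) - x) / δ := by
      rw [abs_of_nonneg (by linarith)]
      field_simp
      ring
    rw [e, max_eq_right (div_nonneg (by linarith) hδ.le)]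
  · simp only [Set.mem_Icc, not_and_or, not_le] at h1 h2
    have hd : δ ≤ |x - a| := by
      rcases h1 with h | h
      · rw [abs_of_nonpos (by linarith)]; linarith
      · rcases h2 with h' | h'
        · linarith
        · rw [abs_of_nonneg (by linarith)]; linarith
    rw [max_eq_left]
    rw [sub_nonpos, le_div_iff₀ hδ, one_mul]
    exact hd

lemma tent_nonneg (a δ x : ℝ) (hδ : 0 < δ) : 0 ≤ tent a δ x := by
  rw [tent_eq_max a δ x hδ]; exact le_max_left _ _

lemma tent_le_one (a δ x : ℝ) (hδ : 0 < δ) : tent a δ x ≤ 1 := by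
  rw [tent_eq_max a δ x hδ]
  have h : 0 ≤ |x - a| / δ := div_nonneg (abs_nonneg _) hδ.le
  exact max_le (by norm_num) (by linarith)

lemma tent_zero (a δ x : ℝ) (hδ : 0 < δ) (h : δ ≤ |x - a|) : tent a δ x = 0 := by
  rw [tent_eq_max a δ x hδ]
  rw [max_eq_left]
  rw [sub_nonpos, le_div_iff₀ hδ, one_mul]
  exact h

lemma tent_lip (a δ x y : ℝ) (hδ : 0 < δ) :
    |tent a δ x - tent a δ y| ≤ |x - y| / δ := by
  rw [tent_eq_max a δ x hδ, tent_eq_max a δ y hδ, max_comm 0 (1 - |x - a| / δ),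
    max_comm 0 (1 - |y - a| / δ)]
  refine le_trans (abs_max_sub_max_le_abs _ _ _) ?_
  have e : (1 - |x - a| / δ) - (1 - |y - a| / δ) = (|y - a| - |x - a|) / δ := by ring
  rw [e, abs_div, abs_of_pos hδ]
  have hle : |(|y - a| - |x - a|)| ≤ |x - y| := by
    calc |(|y - a| - |x - a|)| ≤ |(y - a) - (x - a)| := abs_abs_sub_abs_le_abs_sub _ _
      _ = |x - y| := by rw [show (y - a) - (x - a) = -(x - y) by ring, abs_neg]
  exact (div_le_div_iff_of_pos_right hδ).mpr hle

lemma Fex_ge (δ x : ℝ) (hδ : 0 < δ) : -(|x| / 2) ≤ Fex δ x := by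
  have t1 := tent_nonneg (-2) 0.1 x (by norm_num)
  have t2 := tent_nonneg 1.5 δ x hδ
  have t3 := tent_nonneg 1.8 δ x hδ
  unfold Fex
  norm_num
  linarith

lemma Fex_le (δ x : ℝ) (hδ : 0 < δ) (hδ1 : δ ≤ 1/100) : Fex δ x ≤ 2.1 := by
  have t1 := tent_le_one (-2) 0.1 x (by norm_num)
  have hx0 : 0 ≤ |x| := abs_nonneg x
  by_cases h : |x + 2| < 0.1
  · have hx : -2.1 < x ∧ x < -1.9 := by
      rw [abs_lt] at h; constructor <;> linarith [h.1, h.2]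
    have hxa : (1.9 : ℝ) ≤ |x| := le_abs.mpr (Or.inr (by linarith [hx.2]))
    have t2 : tent 1.5 δ x = 0 :=
      tent_zero _ _ _ hδ (le_abs.mpr (Or.inr (by linarith [hx.2])))
    have t3 : tent 1.8 δ x = 0 :=
      tent_zero _ _ _ hδ (le_abs.mpr (Or.inr (by linarith [hx.2])))
    unfold Fex
    rw [t2, t3]
    norm_num
    linarith
  · push_neg at h
    have t1' : tent (-2) 0.1 x = 0 := by
      apply tent_zero _ _ _ (by norm_num)
      rw [show x - (-2 : ℝ) = x + 2 by ring]
      exact h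
    have t2 := tent_le_one 1.5 δ x hδ
    have t3 := tent_le_one 1.8 δ x hδ
    unfold Fex
    rw [t1']
    norm_num
    linarith

lemma Fex_outside (δ x : ℝ) (hδ : 0 < δ) (h : (0.1 : ℝ) ≤ |x + 2|) :
    Fex δ x ≤ -(|x| / 2) + 0.4 := by
  have t1 : tent (-2) 0.1 x = 0 := by
    apply tent_zero _ _ _ (by norm_num)
    rw [show x - (-2 : ℝ) = x + 2 by ring]
    exact h
  have t2 := tent_le_one 1.5 δ x hδ
  have t3 := tent_le_one 1.8 δ x hδ
  unfold Fex
  rw [t1]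
  norm_num
  linarith

lemma Fex_small (δ x : ℝ) (hδ : 0 < δ) (hδ1 : δ ≤ 1/100) (h : |x| ≤ 1.3) :
    Fex δ x = -(|x| / 2) := by
  have hx := abs_le.mp h
  have t1 : tent (-2) 0.1 x = 0 := by
    apply tent_zero _ _ _ (by norm_num)
    exact le_abs.mpr (Or.inl (by linarith [hx.1]))
  have t2 : tent 1.5 δ x = 0 :=
    tent_zero _ _ _ hδ (le_abs.mpr (Or.inr (by linarith [hx.2])))
  have t3 : tent 1.8 δ x = 0 :=
    tent_zero _ _ _ hδ (le_abs.mpr (Or.inr (by linarith [hx.2])))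
  unfold Fex
  rw [t1, t2, t3]
  ring

lemma Fex_lip (δ x y : ℝ) (hδ : 0 < δ) (hδ1 : δ ≤ 1/100) :
    |Fex δ x - Fex δ y| ≤ 31 / δ * |x - y| := by
  have h1 := tent_lip (-2) 0.1 x y (by norm_num)
  have h2 := tent_lip 1.5 δ x y hδ
  have h3 := tent_lip 1.8 δ x y hδ
  have h0 : |(|x| - |y|)| ≤ |x - y| := abs_abs_sub_abs_le_abs_sub x y
  have hd : (0:ℝ) ≤ |x - y| := abs_nonneg _
  have hδi : (100:ℝ) ≤ 1/δ := by
    rw [le_div_iff₀ hδ]; linarith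
  have key : |Fex δ x - Fex δ y| ≤
      0.5 * |x - y| + 30 * |x - y| + 0.2 * (|x - y| / δ) + 0.2 * (|x - y| / δ) := by
    have e : Fex δ x - Fex δ y =
        (-0.5) * (|x| - |y|) + 3 * (tent (-2) 0.1 x - tent (-2) 0.1 y)
        + 0.2 * (tent 1.5 δ x - tent 1.5 δ y) + 0.2 * (tent 1.8 δ x - tent 1.8 δ y) := by
      unfold Fex; ring
    rw [e]
    have tri : ∀ p q r s : ℝ, |p + q + r + s| ≤ |p| + |q| + |r| + |s| := by
      intro p q r s
      calc |p + q + r + s| ≤ |p + q + r| + |s| := abs_add_le _ _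
        _ ≤ (|p + q| + |r|) + |s| := by linarith [abs_add_le (p + q) r]
        _ ≤ ((|p| + |q|) + |r|) + |s| := by linarith [abs_add_le p q]
    refine le_trans (tri _ _ _ _) ?_
    rw [abs_mul, abs_mul, abs_mul, abs_mul]
    have e1 : |x - y| / 0.1 = 10 * |x - y| := by ring
    rw [e1] at h1
    have a1 : |(-0.5:ℝ)| = 0.5 := by norm_num
    have a2 : |(3:ℝ)| = 3 := by norm_num
    have a3 : |(0.2:ℝ)| = 0.2 := by norm_num
    rw [a1, a2, a3]
    linarith
  refine le_trans key ?_
  have h30 : (30.5:ℝ) ≤ 30.6 * (1/δ) := by nlinarith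
  have hP : (30.5:ℝ) * |x - y| ≤ 30.6 * (1 / δ * |x - y|) := by
    rw [← mul_assoc]
    exact mul_le_mul_of_nonneg_right h30 hd
  calc 0.5 * |x - y| + 30 * |x - y| + 0.2 * (|x - y| / δ) + 0.2 * (|x - y| / δ)
      = 30.5 * |x - y| + 0.4 * (1 / δ * |x - y|) := by ring
    _ ≤ 30.6 * (1 / δ * |x - y|) + 0.4 * (1 / δ * |x - y|) := by linarith
    _ = 31 / δ * |x - y| := by ring

lemma traj_succ (δ : ℝ) (θ : ℝ × ℝ) (z : ℝ) (t : ℕ) :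
    traj δ θ z (t + 1) = θ.1 * traj δ θ z t + θ.2 * Fex δ (traj δ θ z t) := rfl

lemma traj_base_succ (δ z : ℝ) (t : ℕ) :
    traj δ ((0 : ℝ), (1 : ℝ)) z (t + 1) = Fex δ (traj δ ((0 : ℝ), (1 : ℝ)) z t) := by
  rw [traj_succ]; norm_num

/-- The unperturbed trajectory stays in `[-5,5]`. -/
lemma x_bound (δ z : ℝ) (hδ : 0 < δ) (hδ1 : δ ≤ 1/100) (hz : |z| ≤ 5) :
    ∀ t, |traj δ ((0 : ℝ), (1 : ℝ)) z t| ≤ 5 := by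
  intro t
  induction t with
  | zero => exact hz
  | succ t ih =>
    rw [traj_base_succ]
    have h1 := Fex_ge δ (traj δ ((0 : ℝ), (1 : ℝ)) z t) hδ
    have h2 := Fex_le δ (traj δ ((0 : ℝ), (1 : ℝ)) z t) hδ hδ1
    have h3 := abs_le.mp ih
    rw [abs_le]
    constructor
    · have : |traj δ ((0 : ℝ), (1 : ℝ)) z t| ≤ 5 := ih
      nlinarith [abs_nonneg (traj δ ((0 : ℝ), (1 : ℝ)) z t)]
    · norm_num at h2; linarith

/-- After three steps the unperturbed trajectory is within `[-1.2, 1.2]`. -/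
lemma x_small (δ z : ℝ) (hδ : 0 < δ) (hδ1 : δ ≤ 1/100) (hz : |z| ≤ 5) :
    ∀ t, |traj δ ((0 : ℝ), (1 : ℝ)) z (3 + t)| ≤ 1.2 := by
  set x : ℕ → ℝ := traj δ ((0 : ℝ), (1 : ℝ)) z with hx
  have hx1 : -2.5 ≤ x 1 ∧ x 1 ≤ 2.1 := by
    have h1 := Fex_ge δ (x 0) hδ
    have h2 := Fex_le δ (x 0) hδ hδ1
    have h3 : |x 0| ≤ 5 := hz
    have e : x 1 = Fex δ (x 0) := traj_base_succ δ z 0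
    rw [e]
    constructor
    · linarith
    · exact h2
  have hx1' : |x 1| ≤ 2.5 := abs_le.mpr ⟨hx1.1, by linarith [hx1.2]⟩
  have hx2 : -1.25 ≤ x 2 ∧ x 2 ≤ 2.1 := by
    have h1 := Fex_ge δ (x 1) hδ
    have h2 := Fex_le δ (x 1) hδ hδ1
    have e : x 2 = Fex δ (x 1) := traj_base_succ δ z 1
    rw [e]
    constructor
    · linarith
    · exact h2
  have hx2' : |x 2| ≤ 2.1 := abs_le.mpr ⟨by linarith [hx2.1], hx2.2⟩
  have hx3 : |x 3| ≤ 1.2 := by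
    have habs : (0.1 : ℝ) ≤ |x 2 + 2| := le_abs.mpr (Or.inl (by linarith [hx2.1]))
    have h1 := Fex_ge δ (x 2) hδ
    have h2 := Fex_outside δ (x 2) hδ habs
    have e : x 3 = Fex δ (x 2) := traj_base_succ δ z 2
    rw [e, abs_le]
    constructor
    · nlinarith [abs_nonneg (x 2)]
    · nlinarith [abs_nonneg (x 2)]
  intro t
  induction t with
  | zero => exact hx3
  | succ t ih =>
    have e : x (3 + (t + 1)) = Fex δ (x (3 + t)) := traj_base_succ δ z (3 + t)
    rw [e, Fex_small δ (x (3 + t)) hδ hδ1 (by linarith [ih]), abs_neg, abs_div]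
    rw [abs_abs]
    have : |(2:ℝ)| = 2 := by norm_num
    rw [this]
    linarith [ih]

/-- The perturbed trajectory stays in `[-9,9]`. -/
lemma y_bound (δ z : ℝ) (hδ : 0 < δ) (hδ1 : δ ≤ 1/100) (hz : |z| ≤ 5) (dθ : ℝ × ℝ)
    (hm : l1 dθ ≤ 0.1) :
    ∀ t, |traj δ (((0 : ℝ), (1 : ℝ)) + dθ) z t| ≤ 9 := by
  have ha : |dθ.1| ≤ 0.1 := le_trans (le_add_of_nonneg_right (abs_nonneg _)) hm
  have hb : |dθ.2| ≤ 0.1 := le_trans (le_add_of_nonneg_left (abs_nonneg _)) hm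
  have hc1 : ((((0 : ℝ), (1 : ℝ)) : ℝ × ℝ) + dθ).1 = dθ.1 := by simp
  have hc2 : ((((0 : ℝ), (1 : ℝ)) : ℝ × ℝ) + dθ).2 = 1 + dθ.2 := by simp
  intro t
  induction t with
  | zero => exact le_trans hz (by norm_num)
  | succ t ih =>
    set w := traj δ (((0 : ℝ), (1 : ℝ)) + dθ) z t with hw
    have ey : traj δ (((0 : ℝ), (1 : ℝ)) + dθ) z (t + 1) = dθ.1 * w + (1 + dθ.2) * Fex δ w := by
      rw [traj_succ, hc1, hc2]
    have hFw : |Fex δ w| ≤ 4.6 := by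
      have h1 := Fex_ge δ w hδ
      have h2 := Fex_le δ w hδ hδ1
      have h3 := abs_le.mp ih
      rw [abs_le]
      constructor
      · nlinarith [abs_nonneg w]
      · norm_num at h2 ⊢; linarith
    have h12 : |1 + dθ.2| ≤ 1.1 := le_trans (abs_add_le 1 dθ.2) (by norm_num; linarith)
    rw [ey]
    calc |dθ.1 * w + (1 + dθ.2) * Fex δ w| ≤ |dθ.1| * |w| + |1 + dθ.2| * |Fex δ w| := by
          refine le_trans (abs_add_le _ _) ?_
          rw [abs_mul, abs_mul]
      _ ≤ 0.1 * 9 + 1.1 * 4.6 := by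
          have p1 : |dθ.1| * |w| ≤ 0.1 * 9 :=
            mul_le_mul ha ih (abs_nonneg _) (by norm_num)
          have p2 : |1 + dθ.2| * |Fex δ w| ≤ 1.1 * 4.6 :=
            mul_le_mul h12 hFw (abs_nonneg _) (by norm_num)
          linarith
      _ ≤ 9 := by norm_num

/-- Crude one-step error estimate (valid everywhere). -/
lemma crude_pt (δ a b X Y : ℝ) (hδ : 0 < δ) (hδ1 : δ ≤ 1/100) (hY : |Y| ≤ 9) :
    |(a * Y + (1 + b) * Fex δ Y) - Fex δ X| ≤ 31/δ * |Y - X| + 9 * (|a| + |b|) := by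
  have hFy : |Fex δ Y| ≤ 4.6 := by
    have h1 := Fex_ge δ Y hδ
    have h2 := Fex_le δ Y hδ hδ1
    have h3 := abs_le.mp hY
    rw [abs_le]
    constructor
    · nlinarith [abs_nonneg Y, hY]
    · norm_num at h2 ⊢; linarith
  have hlip := Fex_lip δ Y X hδ hδ1
  have p1 : |a| * |Y| ≤ |a| * 9 := mul_le_mul_of_nonneg_left hY (abs_nonneg _)
  have p2 : |b| * |Fex δ Y| ≤ |b| * 4.6 := mul_le_mul_of_nonneg_left hFy (abs_nonneg _)
  have e : (a * Y + (1 + b) * Fex δ Y) - Fex δ X =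
      a * Y + b * Fex δ Y + (Fex δ Y - Fex δ X) := by ring
  rw [e]
  calc |a * Y + b * Fex δ Y + (Fex δ Y - Fex δ X)|
      ≤ |a * Y + b * Fex δ Y| + |Fex δ Y - Fex δ X| := abs_add_le _ _
    _ ≤ (|a| * |Y| + |b| * |Fex δ Y|) + 31/δ * |Y - X| := by
        have := abs_add_le (a * Y) (b * Fex δ Y)
        rw [abs_mul, abs_mul] at this
        linarith
    _ ≤ 31/δ * |Y - X| + 9 * (|a| + |b|) := by
        linarith [abs_nonneg a, abs_nonneg b]

/-- Refined one-step error estimate in the contraction region. -/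
lemma refined_pt (δ a b X Y : ℝ) (hδ : 0 < δ) (hδ1 : δ ≤ 1/100)
    (hX : |X| ≤ 1.2) (hYX : |Y - X| ≤ 0.1) :
    |(a * Y + (1 + b) * Fex δ Y) - Fex δ X| ≤ |Y - X| / 2 + 1.3 * (|a| + |b|) := by
  have hYs : |Y| ≤ 1.3 := by
    calc |Y| = |(Y - X) + X| := by ring_nf
      _ ≤ |Y - X| + |X| := abs_add_le _ _
      _ ≤ 1.3 := by linarith
  have e : (a * Y + (1 + b) * Fex δ Y) - Fex δ X =
      (a * Y + b * (-(|Y| / 2))) + (|X| - |Y|) / 2 := by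
    rw [Fex_small δ Y hδ hδ1 hYs, Fex_small δ X hδ hδ1 (le_trans hX (by norm_num))]
    ring
  have h0 : |(|X| - |Y|)| ≤ |Y - X| := by
    calc |(|X| - |Y|)| ≤ |X - Y| := abs_abs_sub_abs_le_abs_sub _ _
      _ = |Y - X| := abs_sub_comm _ _
  have p1 : |a| * |Y| ≤ |a| * 1.3 := mul_le_mul_of_nonneg_left hYs (abs_nonneg _)
  have p2 : |b| * |(-(|Y| / 2))| ≤ |b| * 0.65 := by
    apply mul_le_mul_of_nonneg_left _ (abs_nonneg _)
    rw [abs_neg, abs_of_nonneg (by positivity)]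
    linarith
  rw [e]
  calc |(a * Y + b * (-(|Y| / 2))) + (|X| - |Y|) / 2|
      ≤ |a * Y + b * (-(|Y| / 2))| + |(|X| - |Y|) / 2| := abs_add_le _ _
    _ ≤ (|a| * |Y| + |b| * |(-(|Y| / 2))|) + |(|X| - |Y|)| / 2 := by
        have := abs_add_le (a * Y) (b * (-(|Y| / 2)))
        rw [abs_mul, abs_mul] at this
        rw [abs_div, (by norm_num : |(2:ℝ)| = 2)]
        linarith
    _ ≤ |Y - X| / 2 + 1.3 * (|a| + |b|) := by
        linarith [abs_nonneg a, abs_nonneg b]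

/-- Abstract error-propagation core: pure arithmetic. -/
lemma err_core (L m : ℝ) (x y : ℕ → ℝ) (hm0 : 0 ≤ m) (hL1 : 1 ≤ L)
    (hEm : (27 * L^2 + 3) * m ≤ 1/25)
    (h00 : y 0 = x 0)
    (crude : ∀ t, |y (t+1) - x (t+1)| ≤ L * |y t - x t| + 9 * m)
    (refined : ∀ t, |x t| ≤ 1.2 → |y t - x t| ≤ 0.1 →
      |y (t+1) - x (t+1)| ≤ |y t - x t| / 2 + 1.3 * m)
    (hxs : ∀ s, |x (3 + s)| ≤ 1.2) :
    ∀ t, |y t - x t| ≤ (27 * L^2 + 3) * m := by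
  have hL0 : (0:ℝ) ≤ L := by linarith
  have hLL : L ≤ L^2 := by nlinarith
  have hp : 0 ≤ m * (L^2 - L) := mul_nonneg hm0 (by linarith)
  have hq : 0 ≤ m * (L - 1) := mul_nonneg hm0 (by linarith)
  have hEm0 : 0 ≤ (27 * L^2 + 3) * m := mul_nonneg (by nlinarith) hm0
  have h00' : |y 0 - x 0| = 0 := by rw [h00]; simp
  have e1b : |y 1 - x 1| ≤ 9 * m := by
    have h := crude 0
    rw [h00'] at h
    linarith
  have e2b : |y 2 - x 2| ≤ L * (9 * m) + 9 * m := by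
    have h := crude 1
    have h' := mul_le_mul_of_nonneg_left e1b hL0
    linarith
  have e3b : |y 3 - x 3| ≤ (27 * L^2 + 3) * m := by
    have h := crude 2
    have h' := mul_le_mul_of_nonneg_left e2b hL0
    nlinarith [hp, hq, hm0]
  have key3 : ∀ s, |y (3 + s) - x (3 + s)| ≤ (27 * L^2 + 3) * m := by
    intro s
    induction s with
    | zero => exact e3b
    | succ s ih =>
      have hre := refined (3 + s) (hxs s) (by linarith)
      have estep : (3 + (s + 1)) = (3 + s) + 1 := rfl
      rw [estep]
      nlinarith [hre, ih, hp, hq, hm0]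
  intro t
  match t with
  | 0 => rw [h00']; exact hEm0
  | 1 => refine le_trans e1b ?_; nlinarith [hp, hq, hm0]
  | 2 => refine le_trans e2b ?_; nlinarith [hp, hq, hm0]
  | (s + 3) =>
    have h := key3 s
    rwa [show 3 + s = s + 3 from Nat.add_comm 3 s] at h

/-- Error propagation: the perturbed trajectory stays uniformly close to the unperturbed one. -/
lemma err_bound (δ z : ℝ) (hδ : 0 < δ) (hδ1 : δ ≤ 1/100) (hz : |z| ≤ 5) (dθ : ℝ × ℝ)
    (hm : (27 * (31/δ)^2 + 3) * l1 dθ ≤ 1/25) :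
    ∀ t, |traj δ (((0 : ℝ), (1 : ℝ)) + dθ) z t - traj δ ((0 : ℝ), (1 : ℝ)) z t| ≤
      (27 * (31/δ)^2 + 3) * l1 dθ := by
  have hm0 : 0 ≤ l1 dθ := add_nonneg (abs_nonneg _) (abs_nonneg _)
  have hL1 : (1:ℝ) ≤ 31/δ := by rw [le_div_iff₀ hδ]; linarith
  have hm01 : l1 dθ ≤ 0.1 := by nlinarith [hm, hm0, hL1]
  have hyb := y_bound δ z hδ hδ1 hz dθ hm01
  have hc1 : ((((0 : ℝ), (1 : ℝ)) : ℝ × ℝ) + dθ).1 = dθ.1 := by simp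
  have hc2 : ((((0 : ℝ), (1 : ℝ)) : ℝ × ℝ) + dθ).2 = 1 + dθ.2 := by simp
  apply err_core (31/δ) (l1 dθ) (traj δ ((0 : ℝ), (1 : ℝ)) z)
    (traj δ (((0 : ℝ), (1 : ℝ)) + dθ) z) hm0 hL1 hm rfl
  · intro t
    rw [traj_succ δ (((0 : ℝ), (1 : ℝ)) + dθ) z t, hc1, hc2, traj_base_succ δ z t]
    exact crude_pt δ dθ.1 dθ.2 _ _ hδ hδ1 (hyb t)
  · intro t hxt hyt
    rw [traj_succ δ (((0 : ℝ), (1 : ℝ)) + dθ) z t, hc1, hc2, traj_base_succ δ z t]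
    exact refined_pt δ dθ.1 dθ.2 _ _ hδ hδ1 hxt hyt
  · exact x_small δ z hδ hδ1 hz

/-- Abstract cost-difference bound. -/
lemma cost_diff_core (γ R E : ℝ) (X Y : ℕ → ℝ) (hγ0 : 0 < γ) (hγ1 : γ < 1)
    (hR0 : 0 ≤ R) (hR1 : R ≤ 1) (hX : ∀ t, |X t| ≤ 5) (hY : ∀ t, |Y t| ≤ 9)
    (herr : ∀ t, |Y t - X t| ≤ E) :
    |(∑' t : ℕ, γ ^ t * ((Y t) ^ 2 + R * (Y (t + 1)) ^ 2)) -
      ∑' t : ℕ, γ ^ t * ((X t) ^ 2 + R * (X (t + 1)) ^ 2)| ≤ 28 * E / (1 - γ) := by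
  have hE0 : 0 ≤ E := le_trans (abs_nonneg _) (herr 0)
  have hgeo : Summable (fun t : ℕ => γ ^ t) := summable_geometric_of_lt_one hγ0.le hγ1
  have hf : Summable (fun t : ℕ => γ ^ t * ((Y t) ^ 2 + R * (Y (t + 1)) ^ 2)) := by
    refine Summable.of_nonneg_of_le (fun t => by positivity) (fun t => ?_) (hgeo.mul_left 162)
    have h1 := abs_le.mp (hY t)
    have h2 := abs_le.mp (hY (t + 1))
    have hp : (0:ℝ) ≤ γ ^ t := pow_nonneg hγ0.le t
    have hin : (Y t) ^ 2 + R * (Y (t + 1)) ^ 2 ≤ 162 := by nlinarith [sq_nonneg (Y (t + 1))]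
    calc γ ^ t * ((Y t) ^ 2 + R * (Y (t + 1)) ^ 2) ≤ γ ^ t * 162 :=
          mul_le_mul_of_nonneg_left hin hp
      _ = 162 * γ ^ t := by ring
  have hg : Summable (fun t : ℕ => γ ^ t * ((X t) ^ 2 + R * (X (t + 1)) ^ 2)) := by
    refine Summable.of_nonneg_of_le (fun t => by positivity) (fun t => ?_) (hgeo.mul_left 50)
    have h1 := abs_le.mp (hX t)
    have h2 := abs_le.mp (hX (t + 1))
    have hp : (0:ℝ) ≤ γ ^ t := pow_nonneg hγ0.le t
    have hin : (X t) ^ 2 + R * (X (t + 1)) ^ 2 ≤ 50 := by nlinarith [sq_nonneg (X (t + 1))]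
    calc γ ^ t * ((X t) ^ 2 + R * (X (t + 1)) ^ 2) ≤ γ ^ t * 50 :=
          mul_le_mul_of_nonneg_left hin hp
      _ = 50 * γ ^ t := by ring
  have hpt : ∀ t : ℕ, |γ ^ t * ((Y t) ^ 2 + R * (Y (t + 1)) ^ 2) -
      γ ^ t * ((X t) ^ 2 + R * (X (t + 1)) ^ 2)| ≤ 28 * E * γ ^ t := by
    intro t
    have hp : (0:ℝ) ≤ γ ^ t := pow_nonneg hγ0.le t
    have d1 : |(Y t) ^ 2 - (X t) ^ 2| ≤ 14 * E := by
      have e : (Y t) ^ 2 - (X t) ^ 2 = (Y t + X t) * (Y t - X t) := by ring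
      rw [e, abs_mul]
      have hsum : |Y t + X t| ≤ 14 := le_trans (abs_add_le _ _) (by linarith [hX t, hY t])
      have := mul_le_mul hsum (herr t) (abs_nonneg _) (by norm_num)
      linarith
    have d2 : |(Y (t + 1)) ^ 2 - (X (t + 1)) ^ 2| ≤ 14 * E := by
      have e : (Y (t + 1)) ^ 2 - (X (t + 1)) ^ 2 =
          (Y (t + 1) + X (t + 1)) * (Y (t + 1) - X (t + 1)) := by ring
      rw [e, abs_mul]
      have hsum : |Y (t + 1) + X (t + 1)| ≤ 14 :=
        le_trans (abs_add_le _ _) (by linarith [hX (t + 1), hY (t + 1)])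
      have := mul_le_mul hsum (herr (t + 1)) (abs_nonneg _) (by norm_num)
      linarith
    have e : γ ^ t * ((Y t) ^ 2 + R * (Y (t + 1)) ^ 2) -
        γ ^ t * ((X t) ^ 2 + R * (X (t + 1)) ^ 2) =
        γ ^ t * (((Y t) ^ 2 - (X t) ^ 2) + R * ((Y (t + 1)) ^ 2 - (X (t + 1)) ^ 2)) := by ring
    rw [e, abs_mul, abs_of_nonneg hp]
    have inner : |((Y t) ^ 2 - (X t) ^ 2) + R * ((Y (t + 1)) ^ 2 - (X (t + 1)) ^ 2)| ≤ 28 * E := by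
      refine le_trans (abs_add_le _ _) ?_
      rw [abs_mul, abs_of_nonneg hR0]
      have hmul : R * |(Y (t + 1)) ^ 2 - (X (t + 1)) ^ 2| ≤ R * (14 * E) :=
        mul_le_mul_of_nonneg_left d2 hR0
      nlinarith [abs_nonneg ((Y (t + 1)) ^ 2 - (X (t + 1)) ^ 2)]
    calc γ ^ t * |((Y t) ^ 2 - (X t) ^ 2) + R * ((Y (t + 1)) ^ 2 - (X (t + 1)) ^ 2)|
        ≤ γ ^ t * (28 * E) := mul_le_mul_of_nonneg_left inner hp
      _ = 28 * E * γ ^ t := by ring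
  have hsub : Summable (fun t : ℕ => γ ^ t * ((Y t) ^ 2 + R * (Y (t + 1)) ^ 2) -
      γ ^ t * ((X t) ^ 2 + R * (X (t + 1)) ^ 2)) := hf.sub hg
  have habs : Summable (fun t : ℕ => |γ ^ t * ((Y t) ^ 2 + R * (Y (t + 1)) ^ 2) -
      γ ^ t * ((X t) ^ 2 + R * (X (t + 1)) ^ 2)|) := hsub.abs
  have hgeo' : Summable (fun t : ℕ => 28 * E * γ ^ t) := hgeo.mul_left _
  calc |(∑' t : ℕ, γ ^ t * ((Y t) ^ 2 + R * (Y (t + 1)) ^ 2)) -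
      ∑' t : ℕ, γ ^ t * ((X t) ^ 2 + R * (X (t + 1)) ^ 2)|
      = |∑' t : ℕ, (γ ^ t * ((Y t) ^ 2 + R * (Y (t + 1)) ^ 2) -
          γ ^ t * ((X t) ^ 2 + R * (X (t + 1)) ^ 2))| := by rw [Summable.tsum_sub hf hg]
    _ ≤ ∑' t : ℕ, |γ ^ t * ((Y t) ^ 2 + R * (Y (t + 1)) ^ 2) -
          γ ^ t * ((X t) ^ 2 + R * (X (t + 1)) ^ 2)| := by
        have := norm_tsum_le_tsum_norm (f := fun t : ℕ =>
          γ ^ t * ((Y t) ^ 2 + R * (Y (t + 1)) ^ 2) -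
          γ ^ t * ((X t) ^ 2 + R * (X (t + 1)) ^ 2)) (by simpa [Real.norm_eq_abs] using habs)
        simpa [Real.norm_eq_abs] using this
    _ ≤ ∑' t : ℕ, 28 * E * γ ^ t := Summable.tsum_le_tsum hpt habs hgeo'
    _ = 28 * E * ∑' t : ℕ, γ ^ t := tsum_mul_left
    _ = 28 * E / (1 - γ) := by rw [tsum_geometric_of_lt_one hγ0.le hγ1]; ring

/-- Concrete cost-difference bound for the example. -/
lemma cost_diff (γ R δ z : ℝ) (hγ0 : 0 < γ) (hγ1 : γ < 1) (hR0 : 0 ≤ R) (hR1 : R ≤ 1)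
    (hδ : 0 < δ) (hδ1 : δ ≤ 1/100) (hz : |z| ≤ 5) (dθ : ℝ × ℝ)
    (hm : (27 * (31/δ)^2 + 3) * l1 dθ ≤ 1/25) :
    |cost γ R δ (((0 : ℝ), (1 : ℝ)) + dθ) z - cost γ R δ ((0 : ℝ), (1 : ℝ)) z| ≤
      28 * ((27 * (31/δ)^2 + 3) * l1 dθ) / (1 - γ) := by
  have hm0 : 0 ≤ l1 dθ := add_nonneg (abs_nonneg _) (abs_nonneg _)
  have hL1 : (1:ℝ) ≤ 31/δ := by rw [le_div_iff₀ hδ]; linarith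
  have hm01 : l1 dθ ≤ 0.1 := by nlinarith [hm, hm0, hL1]
  have hxb := x_bound δ z hδ hδ1 hz
  have hyb := y_bound δ z hδ hδ1 hz dθ hm01
  have herr := err_bound δ z hδ hδ1 hz dθ hm
  unfold cost
  exact cost_diff_core γ R ((27 * (31/δ)^2 + 3) * l1 dθ)
    (traj δ ((0 : ℝ), (1 : ℝ)) z) (traj δ (((0 : ℝ), (1 : ℝ)) + dθ) z)
    hγ0 hγ1 hR0 hR1 hxb hyb herr

/-- The contribution of the uniform part of the initial-state distribution is negligible:
for every sufficiently small tent width `δ > 0`, there is `K' > 0` such that for all small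
perturbations `dθ` of `θ = (0,1)`, the averaged cost difference over `(−5,5)` is bounded by
`K'·‖dθ‖₁`. -/
theorem uniform_part_cost_bound (γ R : ℝ)
    (hγ : γ ∈ Set.Ioo (0 : ℝ) 1) (hR : R ∈ Set.Ioo (0 : ℝ) γ) :
    ∃ δ₀ > (0 : ℝ), ∀ δ : ℝ, 0 < δ → δ < δ₀ →
      ∃ K' > (0 : ℝ), ∃ r > (0 : ℝ),
        ∀ dθ : ℝ × ℝ, ‖dθ‖ < r →
          |(1 / 10) * ∫ u in (-5 : ℝ)..5,
              (cost γ R δ (((0, 1) : ℝ × ℝ) + dθ) u - cost γ R δ ((0, 1) : ℝ × ℝ) u)| ≤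
            K' * l1 dθ := by
  obtain ⟨hγ0, hγ1⟩ := hγ
  obtain ⟨hR0, hRγ⟩ := hR
  have hR1 : R ≤ 1 := le_of_lt (hRγ.trans hγ1)
  have hγ' : (0:ℝ) < 1 - γ := by linarith
  refine ⟨1/100, by norm_num, ?_⟩
  intro δ hδ hδ1
  have hδ1' : δ ≤ 1/100 := le_of_lt hδ1
  have hE0 : (0:ℝ) < 27 * (31/δ)^2 + 3 := by positivity
  refine ⟨28 * (27 * (31/δ)^2 + 3) / (1 - γ), by positivity,
    1 / (100 * (27 * (31/δ)^2 + 3)), by positivity, ?_⟩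
  intro dθ hdθ
  have hm0 : 0 ≤ l1 dθ := add_nonneg (abs_nonneg _) (abs_nonneg _)
  have hml : l1 dθ ≤ 2 * ‖dθ‖ := by
    have h1 : |dθ.1| ≤ ‖dθ‖ := by
      have := norm_fst_le dθ
      rwa [Real.norm_eq_abs] at this
    have h2 : |dθ.2| ≤ ‖dθ‖ := by
      have := norm_snd_le dθ
      rwa [Real.norm_eq_abs] at this
    unfold l1
    linarith
  have hm : (27 * (31/δ)^2 + 3) * l1 dθ ≤ 1/25 := by
    have h2 : l1 dθ ≤ 2 / (100 * (27 * (31/δ)^2 + 3)) := by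
      rw [div_eq_mul_one_div]
      linarith
    have h3 : (27 * (31/δ)^2 + 3) * l1 dθ ≤
        (27 * (31/δ)^2 + 3) * (2 / (100 * (27 * (31/δ)^2 + 3))) :=
      mul_le_mul_of_nonneg_left h2 hE0.le
    have h4 : (27 * (31/δ)^2 + 3) * (2 / (100 * (27 * (31/δ)^2 + 3))) = 1/50 := by
      field_simp
      ring
    linarith
  have hpt : ∀ u ∈ Set.uIoc (-5:ℝ) 5,
      ‖cost γ R δ (((0, 1) : ℝ × ℝ) + dθ) u - cost γ R δ ((0, 1) : ℝ × ℝ) u‖ ≤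
        28 * ((27 * (31/δ)^2 + 3) * l1 dθ) / (1 - γ) := by
    intro u hu
    rw [Set.uIoc_of_le (by norm_num : (-5:ℝ) ≤ 5)] at hu
    have hz : |u| ≤ 5 := abs_le.mpr ⟨le_of_lt hu.1, hu.2⟩
    rw [Real.norm_eq_abs]
    exact cost_diff γ R δ u hγ0 hγ1 hR0.le hR1 hδ hδ1' hz dθ hm
  have hint := intervalIntegral.norm_integral_le_of_norm_le_const hpt
  rw [Real.norm_eq_abs] at hint
  have habs10 : |(5:ℝ) - (-5)| = 10 := by norm_num
  rw [habs10] at hint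
  rw [abs_mul, (by norm_num : |(1:ℝ)/10| = 1/10)]
  have hfinal : (1:ℝ)/10 * |∫ u in (-5:ℝ)..5,
      (cost γ R δ (((0, 1) : ℝ × ℝ) + dθ) u - cost γ R δ ((0, 1) : ℝ × ℝ) u)| ≤
      (1:ℝ)/10 * (28 * ((27 * (31/δ)^2 + 3) * l1 dθ) / (1 - γ) * 10) := by
    apply mul_le_mul_of_nonneg_left hint (by norm_num)
  calc (1:ℝ)/10 * |∫ u in (-5:ℝ)..5,
      (cost γ R δ (((0, 1) : ℝ × ℝ) + dθ) u - cost γ R δ ((0, 1) : ℝ × ℝ) u)|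
      ≤ (1:ℝ)/10 * (28 * ((27 * (31/δ)^2 + 3) * l1 dθ) / (1 - γ) * 10) := hfinal
    _ = 28 * (27 * (31/δ)^2 + 3) / (1 - γ) * l1 dθ := by ring
end

section
/- Let n, m, d be positive integers, γ ∈ (0,1), A an n×n real matrix, B an n×m real matrix, K an m×n real matrix, Q an n×n positive semidefinite real matrix and R an m×m positive definite real matrix. Set 𝒜 = A + BK and Q̄ = Q + KᵀRK, assume γ‖𝒜‖² < 1 for the operator norm, and let P = Σ_{s=0}^{∞} γˢ (𝒜ˢ)ᵀ Q̄ 𝒜ˢ (which converges and is positive semidefinite). Let f₁, …, f_d : ℝⁿ → ℝᵐ be globally Lipschitz, continuous functions that are linearly independent in the space of functions ℝⁿ → ℝᵐ, and let ρ₀ be a Borel probability measure on ℝⁿ with full support and finite second moment ∫‖x‖² dρ₀(x) < ∞. Then the d×d matrix H with entries H_{ij} = ∫ [ f_i(x)ᵀ Bᵀ P B f_j(x) + Σ_{t=0}^{∞} γᵗ f_i(𝒜ᵗx)ᵀ R f_j(𝒜ᵗx) ] dρ₀(x) is well defined (all series and integrals converge absolutely), symmetric, and positive definite: for every Δθ ∈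 ℝ^d with Δθ ≠ 0, Δθᵀ H Δθ > 0. -/
open Matrix MeasureTheory
open scoped Matrix.Norms.L2Operator

/-- Cost-to-go matrix `P = Σ_s γˢ (𝒜ˢ)ᵀ Q̄ 𝒜ˢ`. -/
noncomputable def Pmat {n : ℕ} (γ : ℝ) (𝒜 Qb : Matrix (Fin n) (Fin n) ℝ) :
    Matrix (Fin n) (Fin n) ℝ :=
  ∑' s : ℕ, γ ^ s • ((𝒜 ^ s)ᵀ * Qb * 𝒜 ^ s)

/-- The Hessian of the discounted LQR cost at the optimal policy,
`H_{ij} = ∫ [f_i(x)ᵀ BᵀPB f_j(x) + Σ_t γᵗ f_i(𝒜ᵗx)ᵀ R f_j(𝒜ᵗx)] dρ₀(x)`. -/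
noncomputable def hessH {n m d : ℕ} (γ : ℝ) (𝒜 : Matrix (Fin n) (Fin n) ℝ)
    (B : Matrix (Fin n) (Fin m) ℝ) (P : Matrix (Fin n) (Fin n) ℝ)
    (R : Matrix (Fin m) (Fin m) ℝ) (f : Fin d → (Fin n → ℝ) → (Fin m → ℝ))
    (ρ₀ : Measure (Fin n → ℝ)) : Matrix (Fin d) (Fin d) ℝ :=
  Matrix.of fun i j =>
    ∫ x, (f i x ⬝ᵥ (Bᵀ * P * B).mulVec (f j x) +
      ∑' t : ℕ, γ ^ t * (f i ((𝒜 ^ t).mulVec x) ⬝ᵥ R.mulVec (f j ((𝒜 ^ t).mulVec x)))) ∂ρ₀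

/-!
Put `g = Σₖ Δθₖ fₖ`. Expanding bilinearly, `Δθᵀ H Δθ` is the `ρ₀`-integral of
`g(x)ᵀ BᵀPB g(x) + Σₜ γᵗ g(𝒜ᵗx)ᵀ R g(𝒜ᵗx)`. Every summand is nonnegative since `P ⪰ 0` and
`R ≻ 0`, and the `t = 0` term alone integrates to `∫ gᵀRg dρ₀ > 0`: by linear independence the
continuous function `g` is nonzero at some point, hence `gᵀRg > 0` on a nonempty open set, which
has positive `ρ₀`-measure.

Everything converges because Lipschitz maps grow linearly, so all integrands grow quadratically,
while `‖𝒜ᵗx‖² ≲ ‖𝒜‖²ᵗ‖x‖²` makes the series in `t` geometric with ratio `max γ (γ‖𝒜‖²) < 1`;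
the finite second moment of `ρ₀` then gives integrability.
-/

namespace Matrix

section L2OpNorm

variable {𝕜 ι : Type*} [RCLike 𝕜] [Fintype ι] [DecidableEq ι]

lemma l2_opNorm_one_le : ‖(1 : Matrix ι ι 𝕜)‖ ≤ 1 := by
  rw [← l2_opNorm_toEuclideanCLM, map_one]
  exact ContinuousLinearMap.norm_id_le

lemma l2_opNorm_pow_le (A : Matrix ι ι 𝕜) (k : ℕ) : ‖A ^ k‖ ≤ ‖A‖ ^ k := by
  induction k with
  | zero => simpa using l2_opNorm_one_le
  | succ k ih =>
    rw [pow_succ, pow_succ]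
    exact (l2_opNorm_mul _ _).trans (by gcongr)

/-- `ι → 𝕜` carries the sup norm while `‖A‖` is the ℓ²-operator norm; `c` absorbs the comparison. -/
lemma exists_norm_pow_mulVec_le (A : Matrix ι ι 𝕜) :
    ∃ c : ℝ, ∀ (k : ℕ) (x : ι → 𝕜), ‖(A ^ k) *ᵥ x‖ ≤ c * ‖A‖ ^ k * ‖x‖ := by
  set e := EuclideanSpace.equiv ι 𝕜
  refine ⟨‖e.toContinuousLinearMap‖ * ‖e.symm.toContinuousLinearMap‖, fun k x => ?_⟩
  calc ‖(A ^ k) *ᵥ x‖ = ‖e (e.symm ((A ^ k) *ᵥ x))‖ := by simp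
    _ ≤ ‖e.toContinuousLinearMap‖ * ‖e.symm ((A ^ k) *ᵥ x)‖ :=
      e.toContinuousLinearMap.le_opNorm _
    _ ≤ ‖e.toContinuousLinearMap‖ * (‖A‖ ^ k * (‖e.symm.toContinuousLinearMap‖ * ‖x‖)) := by
      gcongr
      calc _ ≤ ‖A ^ k‖ * ‖e.symm x‖ := (A ^ k).l2_opNorm_mulVec (e.symm x)
        _ ≤ _ := by
          gcongr
          exacts [l2_opNorm_pow_le A k, e.symm.toContinuousLinearMap.le_opNorm x]
    _ = _ := by ring

lemma summable_discounted_gramian {γ : ℝ} (hγ : 0 ≤ γ) {A : Matrix ι ι ℝ}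
    (hstab : γ * ‖A‖ ^ 2 < 1) (Q : Matrix ι ι ℝ) :
    Summable fun s : ℕ => γ ^ s • ((A ^ s)ᵀ * Q * A ^ s) := by
  refine .of_norm_bounded ((summable_geometric_of_lt_one (by positivity) hstab).mul_left ‖Q‖)
    fun s => ?_
  have hT : ‖(A ^ s)ᵀ‖ = ‖A ^ s‖ := l2_opNorm_conjTranspose (A ^ s)
  calc ‖γ ^ s • ((A ^ s)ᵀ * Q * A ^ s)‖ ≤ γ ^ s * (‖A ^ s‖ * ‖Q‖ * ‖A ^ s‖) := by
        rw [norm_smul, norm_pow, Real.norm_of_nonneg hγ]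
        gcongr
        calc _ ≤ ‖(A ^ s)ᵀ * Q‖ * ‖A ^ s‖ := l2_opNorm_mul _ _
          _ ≤ ‖(A ^ s)ᵀ‖ * ‖Q‖ * ‖A ^ s‖ := by gcongr; exact l2_opNorm_mul _ _
          _ = _ := by rw [hT]
    _ ≤ γ ^ s * (‖A‖ ^ s * ‖Q‖ * ‖A‖ ^ s) := by gcongr <;> exact l2_opNorm_pow_le A s
    _ = ‖Q‖ * (γ * ‖A‖ ^ 2) ^ s := by ring

end L2OpNorm

variable {ι κ : Type*} [Fintype ι] [Fintype κ]

lemma norm_dotProduct_mulVec_le {R : Type*} [NormedCommRing R] (M : Matrix ι ι R)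
    (u v : ι → R) :
    ‖u ⬝ᵥ M *ᵥ v‖ ≤ (∑ i, ∑ j, ‖M i j‖) * (‖u‖ * ‖v‖) := by
  have huv : ∀ i j, ‖u i * (M i j * v j)‖ ≤ ‖M i j‖ * (‖u‖ * ‖v‖) := fun i j => by
    grw [norm_mul_le, norm_mul_le, norm_le_pi_norm u i, norm_le_pi_norm v j]
    exact le_of_eq (by ring)
  calc ‖u ⬝ᵥ M *ᵥ v‖ = ‖∑ i, ∑ j, u i * (M i j * v j)‖ := by
        simp only [dotProduct, mulVec, Finset.mul_sum]
    _ ≤ ∑ i, ∑ j, ‖M i j‖ * (‖u‖ * ‖v‖) :=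
        (norm_sum_le _ _).trans (Finset.sum_le_sum fun i _ =>
          (norm_sum_le _ _).trans (Finset.sum_le_sum fun j _ => huv i j))
    _ = _ := by simp only [Finset.sum_mul]

lemma IsSymm.dotProduct_mulVec_comm {M : Matrix ι ι ℝ} (hM : M.IsSymm) (u v : ι → ℝ) :
    u ⬝ᵥ M *ᵥ v = v ⬝ᵥ M *ᵥ u := by
  rw [dotProduct_mulVec, ← mulVec_transpose, hM.eq, dotProduct_comm]

lemma sum_sum_mul_dotProduct_mulVec (c : κ → ℝ) (a : κ → ι → ℝ) (M : Matrix ι ι ℝ) :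
    ∑ i, ∑ j, c i * c j * (a i ⬝ᵥ M *ᵥ a j) = (∑ k, c k • a k) ⬝ᵥ M *ᵥ ∑ k, c k • a k := by
  simp only [mulVec_sum, dotProduct_sum, sum_dotProduct, mulVec_smul, smul_dotProduct,
    dotProduct_smul, smul_eq_mul, Finset.mul_sum]
  rw [Finset.sum_comm]
  exact Finset.sum_congr rfl fun i _ => Finset.sum_congr rfl fun j _ => by ring

lemma PosSemidef.transpose_mul_mul_same {A : Matrix ι ι ℝ}
    (hA : A.PosSemidef) (B : Matrix ι κ ℝ) : (Bᵀ * A * B).PosSemidef := by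
  simpa using hA.conjTranspose_mul_mul_same B

lemma PosSemidef.tsum {X : Type*} {f : X → Matrix ι ι ℝ} (hf : Summable f)
    (hpos : ∀ s, (f s).PosSemidef) : (∑' s, f s).PosSemidef := by
  refine posSemidef_iff_dotProduct_mulVec.2 ⟨?_, fun x => ?_⟩
  · exact conjTranspose_tsum.trans (tsum_congr fun s => (hpos s).1)
  · let q : Matrix ι ι ℝ →+ ℝ :=
      AddMonoidHom.mk' (fun M => x ⬝ᵥ M *ᵥ x) fun M N => by simp [add_mulVec, dotProduct_add]
    have hq : Continuous q :=
      continuous_const.dotProduct (continuous_id.matrix_mulVec continuous_const)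
    calc 0 ≤ ∑' s, q (f s) :=
          tsum_nonneg fun s => by simpa [q] using (hpos s).dotProduct_mulVec_nonneg x
      _ = star x ⬝ᵥ (∑' s, f s) *ᵥ x := (hf.map_tsum q hq).symm

end Matrix

section Growth

variable {E F : Type*} [NormedAddCommGroup E] [NormedAddCommGroup F]

def LinearGrowth (u : E → F) : Prop :=
  ∃ C : ℝ, ∀ y, ‖u y‖ ≤ C * (1 + ‖y‖)

def QuadraticGrowth (φ : E → F) : Prop :=
  ∃ C : ℝ, ∀ y, ‖φ y‖ ≤ C * (1 + ‖y‖ ^ 2)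

lemma LipschitzWith.linearGrowth {L : NNReal} {u : E → F} (hu : LipschitzWith L u) :
    LinearGrowth u := by
  refine ⟨‖u 0‖ + L, fun y => ?_⟩
  have h := hu.norm_sub_le y 0
  rw [sub_zero] at h
  nlinarith [norm_le_insert' (u y) (u 0), norm_nonneg y, norm_nonneg (u 0), L.coe_nonneg]

lemma linearGrowth_zero : LinearGrowth (0 : E → F) :=
  ⟨0, fun y => by simp⟩

lemma LinearGrowth.add {u v : E → F} (hu : LinearGrowth u) (hv : LinearGrowth v) :
    LinearGrowth (u + v) := by
  obtain ⟨Cu, hCu⟩ := hu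
  obtain ⟨Cv, hCv⟩ := hv
  exact ⟨Cu + Cv, fun y => (norm_add_le _ _).trans (by linarith [hCu y, hCv y])⟩

lemma LinearGrowth.const_smul {𝕜 : Type*} [NormedField 𝕜] [NormedSpace 𝕜 F] (c : 𝕜)
    {u : E → F} (hu : LinearGrowth u) : LinearGrowth (c • u) := by
  obtain ⟨C, hC⟩ := hu
  refine ⟨‖c‖ * C, fun y => ?_⟩
  rw [Pi.smul_apply, norm_smul, mul_assoc]
  exact mul_le_mul_of_nonneg_left (hC y) (norm_nonneg c)

lemma LinearGrowth.sum {ι : Type*} (s : Finset ι) {u : ι → E → F}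
    (hu : ∀ k ∈ s, LinearGrowth (u k)) : LinearGrowth (∑ k ∈ s, u k) :=
  Finset.sum_induction u LinearGrowth (fun _ _ => .add) linearGrowth_zero hu

lemma QuadraticGrowth.add {φ ψ : E → F} (hφ : QuadraticGrowth φ) (hψ : QuadraticGrowth ψ) :
    QuadraticGrowth (φ + ψ) := by
  obtain ⟨Cφ, hCφ⟩ := hφ
  obtain ⟨Cψ, hCψ⟩ := hψ
  exact ⟨Cφ + Cψ, fun y => (norm_add_le _ _).trans (by linarith [hCφ y, hCψ y])⟩

lemma QuadraticGrowth.integrable [MeasurableSpace E] {μ : Measure E} [IsFiniteMeasure μ]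
    (hmom : Integrable (fun x => ‖x‖ ^ 2) μ) {φ : E → F} (hφ : QuadraticGrowth φ)
    (hmeas : AEStronglyMeasurable φ μ) : Integrable φ μ := by
  obtain ⟨C, hC⟩ := hφ
  exact (((integrable_const 1).add hmom).const_mul C).mono' hmeas
    (.of_forall fun x => by simpa using hC x)

lemma LinearGrowth.quadraticGrowth_dotProduct_mulVec {ι : Type*} [Fintype ι] {u v : E → ι → ℝ}
    (hu : LinearGrowth u) (hv : LinearGrowth v) (M : Matrix ι ι ℝ) :
    QuadraticGrowth fun y => u y ⬝ᵥ M *ᵥ v y := by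
  obtain ⟨Cu, hCu⟩ := hu
  obtain ⟨Cv, hCv⟩ := hv
  refine ⟨2 * (∑ i, ∑ j, ‖M i j‖) * (Cu * Cv), fun y => ?_⟩
  have huv : ‖u y‖ * ‖v y‖ ≤ Cu * Cv * (1 + ‖y‖) ^ 2 :=
    (mul_le_mul (hCu y) (hCv y) (norm_nonneg _) ((norm_nonneg _).trans (hCu y))).trans_eq
      (by ring)
  have hCuv : 0 ≤ Cu * Cv :=
    nonneg_of_mul_nonneg_left ((by positivity : (0:ℝ) ≤ ‖u y‖ * ‖v y‖).trans huv) (by positivity)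
  calc ‖u y ⬝ᵥ M *ᵥ v y‖ ≤ (∑ i, ∑ j, ‖M i j‖) * (‖u y‖ * ‖v y‖) :=
        M.norm_dotProduct_mulVec_le _ _
    _ ≤ (∑ i, ∑ j, ‖M i j‖) * (Cu * Cv * (1 + ‖y‖) ^ 2) := by gcongr
    _ ≤ (∑ i, ∑ j, ‖M i j‖) * (Cu * Cv * (2 * (1 + ‖y‖ ^ 2))) := by
        gcongr
        nlinarith [sq_nonneg (1 - ‖y‖)]
    _ = _ := by ring

end Growth

section Discounted

variable {ι : Type*} [Fintype ι] [DecidableEq ι] {γ : ℝ} {A : Matrix ι ι ℝ} {φ : (ι → ℝ) → ℝ}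

lemma QuadraticGrowth.exists_norm_discounted_le (hφ : QuadraticGrowth φ) (hγ : 0 ≤ γ) :
    ∃ C : ℝ, ∀ (t : ℕ) (x : ι → ℝ),
      ‖γ ^ t * φ ((A ^ t) *ᵥ x)‖ ≤ C * (1 + ‖x‖ ^ 2) * max γ (γ * ‖A‖ ^ 2) ^ t := by
  obtain ⟨C, hC⟩ := hφ
  obtain ⟨c, hc⟩ := A.exists_norm_pow_mulVec_le
  set q := max γ (γ * ‖A‖ ^ 2)
  have hC0 : 0 ≤ C := by simpa using (norm_nonneg _).trans (hC 0)
  refine ⟨C * (1 + c ^ 2), fun t x => ?_⟩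
  have hy : ‖(A ^ t) *ᵥ x‖ ^ 2 ≤ c ^ 2 * ‖x‖ ^ 2 * (‖A‖ ^ 2) ^ t :=
    (pow_le_pow_left₀ (norm_nonneg _) (hc t x) 2).trans_eq (by ring)
  have hγq : γ ^ t ≤ q ^ t := pow_le_pow_left₀ hγ (le_max_left _ _) t
  have hγAq : γ ^ t * (‖A‖ ^ 2) ^ t ≤ q ^ t := by
    rw [← mul_pow]; exact pow_le_pow_left₀ (by positivity) (le_max_right _ _) t
  calc ‖γ ^ t * φ ((A ^ t) *ᵥ x)‖ ≤ γ ^ t * (C * (1 + ‖(A ^ t) *ᵥ x‖ ^ 2)) := by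
        rw [norm_mul, norm_pow, Real.norm_of_nonneg hγ]
        gcongr
        exact hC _
    _ ≤ C * (γ ^ t + c ^ 2 * ‖x‖ ^ 2 * (γ ^ t * (‖A‖ ^ 2) ^ t)) := by
        nlinarith [pow_nonneg hγ t, mul_le_mul_of_nonneg_left hy (pow_nonneg hγ t)]
    _ ≤ C * (q ^ t + c ^ 2 * ‖x‖ ^ 2 * q ^ t) := by gcongr
    _ ≤ C * (1 + c ^ 2) * (1 + ‖x‖ ^ 2) * q ^ t := by
        have : 0 ≤ q ^ t := hγq.trans' (pow_nonneg hγ t)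
        nlinarith [mul_nonneg (mul_nonneg hC0 this) (sq_nonneg c),
          mul_nonneg (mul_nonneg hC0 this) (sq_nonneg ‖x‖)]

lemma QuadraticGrowth.summable_discounted (hφ : QuadraticGrowth φ) (hγ0 : 0 ≤ γ) (hγ1 : γ < 1)
    (hstab : γ * ‖A‖ ^ 2 < 1) (x : ι → ℝ) : Summable fun t : ℕ => γ ^ t * φ ((A ^ t) *ᵥ x) := by
  obtain ⟨C, hC⟩ := hφ.exists_norm_discounted_le (A := A) hγ0
  exact .of_norm_bounded ((summable_geometric_of_lt_one (hγ0.trans (le_max_left _ _))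
    (max_lt hγ1 hstab)).mul_left _) (hC · x)

lemma QuadraticGrowth.discounted_tsum (hφ : QuadraticGrowth φ) (hγ0 : 0 ≤ γ) (hγ1 : γ < 1)
    (hstab : γ * ‖A‖ ^ 2 < 1) : QuadraticGrowth fun x => ∑' t : ℕ, γ ^ t * φ ((A ^ t) *ᵥ x) := by
  obtain ⟨C, hC⟩ := hφ.exists_norm_discounted_le (A := A) hγ0
  set q := max γ (γ * ‖A‖ ^ 2)
  refine ⟨C * (1 - q)⁻¹, fun x => ?_⟩
  refine (tsum_of_norm_bounded (((hasSum_geometric_of_lt_one (hγ0.trans (le_max_left _ _))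
    (max_lt hγ1 hstab)).mul_left (C * (1 + ‖x‖ ^ 2)))) (hC · x)).trans_eq (by ring)

end Discounted

lemma measurable_tsum_of_summable {α E : Type*} [MeasurableSpace α] [NormedAddCommGroup E]
    [MeasurableSpace E] [BorelSpace E] [SecondCountableTopology E]
    {F : ℕ → α → E} (hF : ∀ t, Measurable (F t)) (hsum : ∀ x, Summable fun t => F t x) :
    Measurable fun x => ∑' t, F t x :=
  measurable_of_tendsto_metrizable (fun _ => Finset.measurable_sum _ fun t _ => hF t)
    (tendsto_pi_nhds.2 fun x => (hsum x).hasSum.tendsto_sum_nat)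

section HessKernel

variable {ι κ : Type*} [Fintype ι] [DecidableEq ι] [Fintype κ]

noncomputable def hessKernel (γ : ℝ) (𝒜 : Matrix ι ι ℝ) (M R : Matrix κ κ ℝ)
    (u v : (ι → ℝ) → κ → ℝ) (x : ι → ℝ) : ℝ :=
  u x ⬝ᵥ M *ᵥ v x + ∑' t : ℕ, γ ^ t * (u ((𝒜 ^ t) *ᵥ x) ⬝ᵥ R *ᵥ v ((𝒜 ^ t) *ᵥ x))

variable {γ : ℝ} {𝒜 : Matrix ι ι ℝ} {M R : Matrix κ κ ℝ}

lemma hessKernel_comm (hM : M.IsSymm) (hR : R.IsSymm) (u v : (ι → ℝ) → κ → ℝ) :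
    hessKernel γ 𝒜 M R u v = hessKernel γ 𝒜 M R v u := by
  ext x
  simp only [hessKernel, hM.dotProduct_mulVec_comm (u _), hR.dotProduct_mulVec_comm (u _)]

lemma sum_sum_mul_hessKernel {ι' : Type*} [Fintype ι'] (c : ι' → ℝ)
    (u : ι' → (ι → ℝ) → κ → ℝ) (x : ι → ℝ)
    (hsum : ∀ i j, Summable fun t : ℕ =>
      γ ^ t * (u i ((𝒜 ^ t) *ᵥ x) ⬝ᵥ R *ᵥ u j ((𝒜 ^ t) *ᵥ x))) :
    ∑ i, ∑ j, c i * c j * hessKernel γ 𝒜 M R (u i) (u j) x =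
      hessKernel γ 𝒜 M R (∑ k, c k • u k) (∑ k, c k • u k) x := by
  have hterm : ∀ y, (∑ k, c k • u k) y = ∑ k, c k • u k y := fun y => by simp [Finset.sum_apply]
  set q : ι' → ι' → ℕ → ℝ := fun i j t => u i ((𝒜 ^ t) *ᵥ x) ⬝ᵥ R *ᵥ u j ((𝒜 ^ t) *ᵥ x)
  have htsum : ∑ i, ∑ j, c i * c j * ∑' t : ℕ, γ ^ t * q i j t =
      ∑' t : ℕ, γ ^ t * ((∑ k, c k • u k) ((𝒜 ^ t) *ᵥ x) ⬝ᵥ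
        R *ᵥ (∑ k, c k • u k) ((𝒜 ^ t) *ᵥ x)) :=
    calc _ = ∑ i, ∑' t : ℕ, ∑ j, c i * c j * (γ ^ t * q i j t) :=
          Finset.sum_congr rfl fun i _ => by
            simp only [← tsum_mul_left]
            exact (Summable.tsum_finsetSum fun j _ => (hsum i j).mul_left _).symm
      _ = ∑' t : ℕ, ∑ i, ∑ j, c i * c j * (γ ^ t * q i j t) :=
          (Summable.tsum_finsetSum fun i _ => summable_sum fun j _ => (hsum i j).mul_left _).symm
      _ = _ := tsum_congr fun t => by
          simp only [hterm, ← sum_sum_mul_dotProduct_mulVec, Finset.mul_sum, q]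
          exact Finset.sum_congr rfl fun i _ => Finset.sum_congr rfl fun j _ => by ring
  rw [hessKernel, ← htsum, hterm, ← sum_sum_mul_dotProduct_mulVec, ← Finset.sum_add_distrib]
  exact Finset.sum_congr rfl fun i _ => by
    rw [← Finset.sum_add_distrib]
    simp only [hessKernel, mul_add, q]

lemma dotProduct_mulVec_le_hessKernel (hγ : 0 ≤ γ) (hM : M.PosSemidef) (hR : R.PosSemidef)
    (u : (ι → ℝ) → κ → ℝ) (x : ι → ℝ)
    (hsum : Summable fun t : ℕ => γ ^ t * (u ((𝒜 ^ t) *ᵥ x) ⬝ᵥ R *ᵥ u ((𝒜 ^ t) *ᵥ x))) :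
    u x ⬝ᵥ R *ᵥ u x ≤ hessKernel γ 𝒜 M R u u x := by
  have hnonneg : ∀ y, 0 ≤ y ⬝ᵥ R *ᵥ y := fun y => by simpa using hR.dotProduct_mulVec_nonneg y
  have hfirst : u x ⬝ᵥ R *ᵥ u x ≤
      ∑' t : ℕ, γ ^ t * (u ((𝒜 ^ t) *ᵥ x) ⬝ᵥ R *ᵥ u ((𝒜 ^ t) *ᵥ x)) := by
    simpa using hsum.le_tsum 0 fun t _ => mul_nonneg (pow_nonneg hγ t) (hnonneg _)
  exact hfirst.trans
    (le_add_of_nonneg_left (by simpa using hM.dotProduct_mulVec_nonneg (u x)))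

variable {μ : Measure (ι → ℝ)} [IsFiniteMeasure μ]

lemma integrable_hessKernel (hmom : Integrable (fun x => ‖x‖ ^ 2) μ) (hγ0 : 0 ≤ γ) (hγ1 : γ < 1)
    (hstab : γ * ‖𝒜‖ ^ 2 < 1) {u v : (ι → ℝ) → κ → ℝ} (hu : LinearGrowth u) (hv : LinearGrowth v)
    (huc : Continuous u) (hvc : Continuous v) : Integrable (hessKernel γ 𝒜 M R u v) μ := by
  have hR := hu.quadraticGrowth_dotProduct_mulVec hv R
  refine ((hu.quadraticGrowth_dotProduct_mulVec hv M).add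
    (hR.discounted_tsum hγ0 hγ1 hstab)).integrable hmom (Measurable.aestronglyMeasurable ?_)
  refine (Continuous.measurable ?_).add (measurable_tsum_of_summable
    (fun t => Continuous.measurable ?_) (hR.summable_discounted hγ0 hγ1 hstab)) <;> fun_prop

lemma integral_hessKernel_pos [μ.IsOpenPosMeasure] (hmom : Integrable (fun x => ‖x‖ ^ 2) μ)
    (hγ0 : 0 ≤ γ) (hγ1 : γ < 1) (hstab : γ * ‖𝒜‖ ^ 2 < 1) (hM : M.PosSemidef) (hR : R.PosDef)
    {g : (ι → ℝ) → κ → ℝ} (hg : LinearGrowth g) (hgc : Continuous g) (hg0 : g ≠ 0) :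
    0 < ∫ x, hessKernel γ 𝒜 M R g g x ∂μ := by
  obtain ⟨x₀, hx₀⟩ : ∃ x₀, g x₀ ≠ 0 := by
    by_contra! h
    exact hg0 (funext h)
  have hRg := hg.quadraticGrowth_dotProduct_mulVec hg R
  have hRgc : Continuous fun x => g x ⬝ᵥ R *ᵥ g x := by fun_prop
  have hRgi : Integrable (fun x => g x ⬝ᵥ R *ᵥ g x) μ :=
    hRg.integrable hmom hRgc.aestronglyMeasurable
  calc 0 < ∫ x, g x ⬝ᵥ R *ᵥ g x ∂μ :=
        integral_pos_of_integrable_nonneg_nonzero hRgc hRgi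
          (fun x => by simpa using hR.posSemidef.dotProduct_mulVec_nonneg (g x))
          (by simpa using (hR.dotProduct_mulVec_pos hx₀).ne')
    _ ≤ ∫ x, hessKernel γ 𝒜 M R g g x ∂μ :=
        integral_mono hRgi (integrable_hessKernel hmom hγ0 hγ1 hstab hg hg hgc hgc) fun x =>
          dotProduct_mulVec_le_hessKernel hγ0 hM hR.posSemidef g x
            (hRg.summable_discounted hγ0 hγ1 hstab x)

end HessKernel

lemma hessH_apply {n m d : ℕ} (γ : ℝ) (𝒜 : Matrix (Fin n) (Fin n) ℝ)
    (B : Matrix (Fin n) (Fin m) ℝ) (P : Matrix (Fin n) (Fin n) ℝ) (R : Matrix (Fin m) (Fin m) ℝ)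
    (f : Fin d → (Fin n → ℝ) → (Fin m → ℝ)) (ρ₀ : Measure (Fin n → ℝ)) (i j : Fin d) :
    hessH γ 𝒜 B P R f ρ₀ i j = ∫ x, hessKernel γ 𝒜 (Bᵀ * P * B) R (f i) (f j) x ∂ρ₀ :=
  rfl

lemma dotProduct_hessH_mulVec {n m d : ℕ} {γ : ℝ} {𝒜 : Matrix (Fin n) (Fin n) ℝ}
    {B : Matrix (Fin n) (Fin m) ℝ} {P : Matrix (Fin n) (Fin n) ℝ} {R : Matrix (Fin m) (Fin m) ℝ}
    {f : Fin d → (Fin n → ℝ) → (Fin m → ℝ)} {ρ₀ : Measure (Fin n → ℝ)}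
    (hint : ∀ i j, Integrable (hessKernel γ 𝒜 (Bᵀ * P * B) R (f i) (f j)) ρ₀)
    (hsum : ∀ i j x, Summable fun t : ℕ =>
      γ ^ t * (f i ((𝒜 ^ t) *ᵥ x) ⬝ᵥ R *ᵥ f j ((𝒜 ^ t) *ᵥ x))) (c : Fin d → ℝ) :
    c ⬝ᵥ hessH γ 𝒜 B P R f ρ₀ *ᵥ c =
      ∫ x, hessKernel γ 𝒜 (Bᵀ * P * B) R (∑ k, c k • f k) (∑ k, c k • f k) x ∂ρ₀ := by
  calc c ⬝ᵥ hessH γ 𝒜 B P R f ρ₀ *ᵥ c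
      = ∑ i, ∑ j, ∫ x, c i * c j * hessKernel γ 𝒜 (Bᵀ * P * B) R (f i) (f j) x ∂ρ₀ := by
        simp only [dotProduct, mulVec, Finset.mul_sum, integral_const_mul]
        exact Finset.sum_congr rfl fun i _ => Finset.sum_congr rfl fun j _ => by
          rw [hessH_apply]; ring
    _ = ∫ x, ∑ i, ∑ j, c i * c j * hessKernel γ 𝒜 (Bᵀ * P * B) R (f i) (f j) x ∂ρ₀ := by
        rw [integral_finsetSum _ fun i _ =>
          integrable_finsetSum _ fun j _ => (hint i j).const_mul _]
        exact Finset.sum_congr rfl fun i _ =>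
          (integral_finsetSum _ fun j _ => (hint i j).const_mul _).symm
    _ = _ := integral_congr_ae (.of_forall fun x => sum_sum_mul_hessKernel c f x (hsum · · x))

theorem hessian_positive_definite_general (n m d : ℕ)
    (γ : ℝ) (hγ : γ ∈ Set.Ioo (0 : ℝ) 1)
    (A Q : Matrix (Fin n) (Fin n) ℝ) (B : Matrix (Fin n) (Fin m) ℝ)
    (K : Matrix (Fin m) (Fin n) ℝ)
    (R : Matrix (Fin m) (Fin m) ℝ) (hQ : Q.PosSemidef) (hR : R.PosDef)
    (hstab : γ * ‖A + B * K‖ ^ 2 < 1)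
    (f : Fin d → (Fin n → ℝ) → (Fin m → ℝ))
    (hLip : ∀ k, ∃ L : NNReal, LipschitzWith L (f k))
    (hfi : LinearIndependent ℝ f)
    (ρ₀ : Measure (Fin n → ℝ)) [IsProbabilityMeasure ρ₀]
    (hsupp : ∀ U : Set (Fin n → ℝ), IsOpen U → U.Nonempty → 0 < ρ₀ U)
    (hmom : Integrable (fun x => ‖x‖ ^ 2) ρ₀) :
    (Summable fun s : ℕ =>
      γ ^ s • (((A + B * K) ^ s)ᵀ * (Q + Kᵀ * R * K) * (A + B * K) ^ s)) ∧
    (Pmat γ (A + B * K) (Q + Kᵀ * R * K)).PosSemidef ∧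
    (∀ i j : Fin d, ∀ x : Fin n → ℝ,
      Summable fun t : ℕ => γ ^ t *
        (f i (((A + B * K) ^ t).mulVec x) ⬝ᵥ R.mulVec (f j (((A + B * K) ^ t).mulVec x)))) ∧
    (∀ i j : Fin d,
      Integrable (fun x =>
        f i x ⬝ᵥ (Bᵀ * Pmat γ (A + B * K) (Q + Kᵀ * R * K) * B).mulVec (f j x) +
        ∑' t : ℕ, γ ^ t *
          (f i (((A + B * K) ^ t).mulVec x) ⬝ᵥ R.mulVec (f j (((A + B * K) ^ t).mulVec x))))
        ρ₀) ∧
    (hessH γ (A + B * K) B (Pmat γ (A + B * K) (Q + Kᵀ * R * K)) R f ρ₀).IsSymm ∧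
    (∀ Δθ : Fin d → ℝ, Δθ ≠ 0 →
      0 < Δθ ⬝ᵥ (hessH γ (A + B * K) B
        (Pmat γ (A + B * K) (Q + Kᵀ * R * K)) R f ρ₀).mulVec Δθ) := by
  obtain ⟨hγ0, hγ1⟩ := hγ
  set 𝒜 := A + B * K
  set Qbar := Q + Kᵀ * R * K
  have hsum := summable_discounted_gramian hγ0.le hstab Qbar
  have hQbar : Qbar.PosSemidef := hQ.add (hR.posSemidef.transpose_mul_mul_same K)
  have hP : (Pmat γ 𝒜 Qbar).PosSemidef := PosSemidef.tsum hsum fun s =>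
    (hQbar.transpose_mul_mul_same (𝒜 ^ s)).smul (pow_nonneg hγ0.le s)
  have hM : (Bᵀ * Pmat γ 𝒜 Qbar * B).PosSemidef := hP.transpose_mul_mul_same B
  have hgrowth k : LinearGrowth (f k) := (hLip k).choose_spec.linearGrowth
  have hcont k : Continuous (f k) := (hLip k).choose_spec.continuous
  have hsummable i j x :=
    ((hgrowth i).quadraticGrowth_dotProduct_mulVec (hgrowth j) R).summable_discounted
      hγ0.le hγ1 hstab x
  have hint i j := integrable_hessKernel (M := Bᵀ * Pmat γ 𝒜 Qbar * B) (R := R) hmom hγ0.le hγ1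
    hstab (hgrowth i) (hgrowth j) (hcont i) (hcont j)
  have : ρ₀.IsOpenPosMeasure := ⟨fun U hU hne => (hsupp U hU hne).ne'⟩
  refine ⟨hsum, hP, hsummable, hint, IsSymm.ext fun i j => ?_, fun c hc => ?_⟩
  · rw [hessH_apply, hessH_apply, hessKernel_comm (isHermitian_iff_isSymm.1 hM.isHermitian)
      (isHermitian_iff_isSymm.1 hR.isHermitian)]
  · rw [dotProduct_hessH_mulVec hint hsummable]
    exact integral_hessKernel_pos hmom hγ0.le hγ1 hstab hM hR
      (LinearGrowth.sum _ fun k _ => (hgrowth k).const_smul _)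
      (by rw [Finset.sum_fn]; fun_prop)
      fun h => hc (funext (Fintype.linearIndependent_iff.1 hfi c h))

/-- The Hessian `H` of the discounted LQR cost at the optimal policy for the class
`π_θ = Σ_k θ_k f_k` is well defined, symmetric and positive definite: here `𝒜 = A + BK`,
`Q̄ = Q + KᵀRK`, `γ‖𝒜‖² < 1` for the ℓ²-operator norm, `P = Σ_s γˢ(𝒜ˢ)ᵀQ̄𝒜ˢ`, the `f_k` are
Lipschitz, continuous and linearly independent, and `ρ₀` is a full-support probability
measure with finite second moment. -/
theorem hessian_positive_definite (n m d : ℕ) (hn : 0 < n) (hm : 0 < m) (hd : 0 < d)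
    (γ : ℝ) (hγ : γ ∈ Set.Ioo (0 : ℝ) 1)
    (A Q : Matrix (Fin n) (Fin n) ℝ) (B : Matrix (Fin n) (Fin m) ℝ)
    (K : Matrix (Fin m) (Fin n) ℝ)
    (R : Matrix (Fin m) (Fin m) ℝ) (hQ : Q.PosSemidef) (hR : R.PosDef)
    (hstab : γ * ‖A + B * K‖ ^ 2 < 1)
    (f : Fin d → (Fin n → ℝ) → (Fin m → ℝ))
    (hLip : ∀ k, ∃ L : NNReal, LipschitzWith L (f k))
    (hfc : ∀ k, Continuous (f k)) (hfi : LinearIndependent ℝ f)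
    (ρ₀ : Measure (Fin n → ℝ)) [IsProbabilityMeasure ρ₀]
    (hsupp : ∀ U : Set (Fin n → ℝ), IsOpen U → U.Nonempty → 0 < ρ₀ U)
    (hmom : Integrable (fun x => ‖x‖ ^ 2) ρ₀) :
    (Summable fun s : ℕ =>
      γ ^ s • (((A + B * K) ^ s)ᵀ * (Q + Kᵀ * R * K) * (A + B * K) ^ s)) ∧
    (Pmat γ (A + B * K) (Q + Kᵀ * R * K)).PosSemidef ∧
    (∀ i j : Fin d, ∀ x : Fin n → ℝ,
      Summable fun t : ℕ => γ ^ t *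
        (f i (((A + B * K) ^ t).mulVec x) ⬝ᵥ R.mulVec (f j (((A + B * K) ^ t).mulVec x)))) ∧
    (∀ i j : Fin d,
      Integrable (fun x =>
        f i x ⬝ᵥ (Bᵀ * Pmat γ (A + B * K) (Q + Kᵀ * R * K) * B).mulVec (f j x) +
        ∑' t : ℕ, γ ^ t *
          (f i (((A + B * K) ^ t).mulVec x) ⬝ᵥ R.mulVec (f j (((A + B * K) ^ t).mulVec x))))
        ρ₀) ∧
    (hessH γ (A + B * K) B (Pmat γ (A + B * K) (Q + Kᵀ * R * K)) R f ρ₀).IsSymm ∧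
    (∀ Δθ : Fin d → ℝ, Δθ ≠ 0 →
      0 < Δθ ⬝ᵥ (hessH γ (A + B * K) B
        (Pmat γ (A + B * K) (Q + Kᵀ * R * K)) R f ρ₀).mulVec Δθ) :=
  hessian_positive_definite_general n m d γ hγ A Q B K R hQ hR hstab f hLip hfi ρ₀ hsupp hmom
end
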